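/- arXiv:2004.05442 — 12 statements merged into one kernel-verified Lean document; each statement's English description precedes it below -/
import Mathlib

section
/- Let 𝒳 ⊂ ℝ be a nonempty compact set and let f₁, f₂ : 𝒳 → ℝ be continuous with f₁(x) > 0 and f₂(x) > 0 for all x ∈ 𝒳. Then sup over w ∈ [0,1] and x₁, x₂ ∈ 𝒳 of min{ w·f₁(x₁) + (1−w)·f₁(x₂) , w·f₂(x₁) + (1−w)·f₂(x₂) } equals inf over λ ∈ [0,1] of sup over x ∈ 𝒳 of ( λ·f₁(x) + (1−λ)·f₂(x) ). -/
/-!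
Let `φ(l) = max_{x ∈ X} (l f₁ x + (1 - l) f₂ x)`. Weak duality is immediate: the minimum of two
numbers is at most any convex combination of them. For the converse, `φ` is lower semicontinuous, so
it attains its minimum on `[0, 1]` at some `l`. A Danskin-type argument (maximizers at `t ↓ l`
accumulate at a maximizer at `l`) shows that if `l < 1` some maximizer at `l` has `f₂ ≤ f₁`, and
symmetrically if `0 < l` some maximizer has `f₁ ≤ f₂`. Mixing two such points with the weight that
equalizes both coordinates gives a primal value `φ(l)`.
-/

open Set Filter Topology

theorem exists_le_min_mix {p₁ q₁ p₂ q₂ l M : ℝ} (h₁ : q₁ ≤ p₁) (h₂ : p₂ ≤ q₂)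
    (hM₁ : M ≤ l * p₁ + (1 - l) * q₁) (hM₂ : M ≤ l * p₂ + (1 - l) * q₂) :
    ∃ w ∈ Icc (0:ℝ) 1, M ≤ min (w * p₁ + (1 - w) * p₂) (w * q₁ + (1 - w) * q₂) := by
  rcases (add_nonneg (sub_nonneg.2 h₁) (sub_nonneg.2 h₂)).eq_or_lt with hsum | hsum
  · refine ⟨1, ⟨zero_le_one, le_rfl⟩, ?_⟩
    have : p₁ = q₁ := by linarith
    subst this
    simpa using hM₁.trans_eq (by ring)
  set w := (q₂ - p₂) / (p₁ - q₁ + (q₂ - p₂))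
  have hw₀ : 0 ≤ w := div_nonneg (sub_nonneg.2 h₂) hsum.le
  have hw₁ : w ≤ 1 := div_le_one_of_le₀ (by linarith) hsum.le
  have heq : w * p₁ + (1 - w) * p₂ = w * q₁ + (1 - w) * q₂ := by
    simp only [w]; field_simp; ring
  refine ⟨w, ⟨hw₀, hw₁⟩, ?_⟩
  rw [← heq, min_self]
  have hw₁' : 0 ≤ 1 - w := sub_nonneg.2 hw₁
  calc M = w * M + (1 - w) * M := by ring
    _ ≤ w * (l * p₁ + (1 - l) * q₁) + (1 - w) * (l * p₂ + (1 - l) * q₂) := by gcongr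
    _ = w * p₁ + (1 - w) * p₂ := by linear_combination (l - 1) * heq

theorem IsMinOn.isMinFilter_nhdsGT {α β : Type*} [TopologicalSpace α] [LinearOrder α]
    [OrderTopology α] [Preorder β] {f : α → β} {a b l : α} (hmin : IsMinOn f (Icc a b) l)
    (hal : a ≤ l) (hlb : l < b) : IsMinFilter f (𝓝[>] l) l :=
  hmin.filter_mono <| le_principal_iff.2 <|
    mem_of_superset (Icc_mem_nhdsGT hlb) (Icc_subset_Icc_left hal)

section DualObjective

variable {α : Type*} {X : Set α} {f₁ f₂ : α → ℝ}

noncomputable def dualObjective (X : Set α) (f₁ f₂ : α → ℝ) (l : ℝ) : ℝ :=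
  sSup ((fun x => l * f₁ x + (1 - l) * f₂ x) '' X)

theorem dualObjective_swap (X : Set α) (f₁ f₂ : α → ℝ) :
    dualObjective X f₂ f₁ = dualObjective X f₁ f₂ ∘ (fun t => 1 - t) := by
  funext t
  simp only [dualObjective, Function.comp_apply]
  congr 2
  funext x
  ring

variable [TopologicalSpace α] (hXc : IsCompact X) (hf₁ : ContinuousOn f₁ X)
  (hf₂ : ContinuousOn f₂ X)
include hXc hf₁ hf₂

theorem isCompact_image_mix (l : ℝ) :
    IsCompact ((fun x => l * f₁ x + (1 - l) * f₂ x) '' X) :=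
  hXc.image_of_continuousOn ((continuousOn_const.mul hf₁).add (continuousOn_const.mul hf₂))

theorem mix_le_dualObjective {x : α} (hx : x ∈ X) (l : ℝ) :
    l * f₁ x + (1 - l) * f₂ x ≤ dualObjective X f₁ f₂ l :=
  le_csSup (isCompact_image_mix hXc hf₁ hf₂ l).bddAbove (mem_image_of_mem _ hx)

theorem exists_mix_eq_dualObjective (hX : X.Nonempty) (l : ℝ) :
    ∃ x ∈ X, l * f₁ x + (1 - l) * f₂ x = dualObjective X f₁ f₂ l :=
  (isCompact_image_mix hXc hf₁ hf₂ l).sSup_mem (hX.image _)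

theorem lowerSemicontinuous_dualObjective : LowerSemicontinuous (dualObjective X f₁ f₂) := by
  have hsup : dualObjective X f₁ f₂ = fun l => ⨆ x : X, l * f₁ x + (1 - l) * f₂ x :=
    funext fun l => sSup_image'
  rw [hsup]
  refine lowerSemicontinuous_ciSup (fun l => ?_) fun x =>
    (by fun_prop : Continuous _).lowerSemicontinuous
  rw [← image_eq_range (fun x => l * f₁ x + (1 - l) * f₂ x) X]
  exact (isCompact_image_mix hXc hf₁ hf₂ l).bddAbove

theorem min_mix_le_dualObjective {w l : ℝ} (hw : w ∈ Icc (0:ℝ) 1) (hl : l ∈ Icc (0:ℝ) 1)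
    {x₁ x₂ : α} (hx₁ : x₁ ∈ X) (hx₂ : x₂ ∈ X) :
    min (w * f₁ x₁ + (1 - w) * f₁ x₂) (w * f₂ x₁ + (1 - w) * f₂ x₂) ≤ dualObjective X f₁ f₂ l := by
  set A := w * f₁ x₁ + (1 - w) * f₁ x₂
  set B := w * f₂ x₁ + (1 - w) * f₂ x₂
  obtain ⟨hw₀, hw₁⟩ := hw
  obtain ⟨hl₀, hl₁⟩ := hl
  have hw₁' : 0 ≤ 1 - w := sub_nonneg.2 hw₁
  have hl₁' : 0 ≤ 1 - l := sub_nonneg.2 hl₁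
  calc min A B = l * min A B + (1 - l) * min A B := by ring
    _ ≤ l * A + (1 - l) * B := by gcongr; exacts [min_le_left A B, min_le_right A B]
    _ = w * (l * f₁ x₁ + (1 - l) * f₂ x₁) + (1 - w) * (l * f₁ x₂ + (1 - l) * f₂ x₂) := by ring
    _ ≤ w * dualObjective X f₁ f₂ l + (1 - w) * dualObjective X f₁ f₂ l := by
        gcongr <;> exact mix_le_dualObjective hXc hf₁ hf₂ ‹_› l
    _ = dualObjective X f₁ f₂ l := by ring

theorem le_of_dualObjective_le {l t : ℝ} (hlt : l < t)
    (hle : dualObjective X f₁ f₂ l ≤ dualObjective X f₁ f₂ t) {x : α} (hx : x ∈ X)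
    (hxt : t * f₁ x + (1 - t) * f₂ x = dualObjective X f₁ f₂ t) : f₂ x ≤ f₁ x := by
  have h := mix_le_dualObjective hXc hf₁ hf₂ hx l
  have : 0 ≤ (t - l) * (f₁ x - f₂ x) := by linarith
  exact sub_nonneg.1 (nonneg_of_mul_nonneg_right this (sub_pos.2 hlt))

theorem exists_mix_eq_dualObjective_and_le_of_isMinFilter [FirstCountableTopology α]
    (hX : X.Nonempty) {l : ℝ} (hmin : IsMinFilter (dualObjective X f₁ f₂) (𝓝[>] l) l) :
    ∃ x ∈ X, l * f₁ x + (1 - l) * f₂ x = dualObjective X f₁ f₂ l ∧ f₂ x ≤ f₁ x := by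
  obtain ⟨u, hu⟩ := exists_seq_tendsto (𝓝[>] l)
  choose x hxX hx using fun n => exists_mix_eq_dualObjective hXc hf₁ hf₂ hX (u n)
  obtain ⟨a, ha, σ, hσ, hxa⟩ := hXc.tendsto_subseq hxX
  have huσ := hu.comp hσ.tendsto_atTop
  have hxaX : Tendsto (x ∘ σ) atTop (𝓝[X] a) :=
    tendsto_nhdsWithin_iff.2 ⟨hxa, Eventually.of_forall fun k => hxX _⟩
  have hul : Tendsto (u ∘ σ) atTop (𝓝 l) := tendsto_nhds_of_tendsto_nhdsWithin huσ
  have h₁ := (hf₁ a ha).tendsto.comp hxaX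
  have h₂ := (hf₂ a ha).tendsto.comp hxaX
  have hkey : ∀ᶠ k in atTop, dualObjective X f₁ f₂ l ≤
      u (σ k) * f₁ (x (σ k)) + (1 - u (σ k)) * f₂ (x (σ k)) ∧ f₂ (x (σ k)) ≤ f₁ (x (σ k)) := by
    filter_upwards [huσ.eventually (eventually_mem_nhdsWithin.and hmin)] with k ⟨hlt, hle⟩
    exact ⟨(hx (σ k)).symm ▸ hle, le_of_dualObjective_le hXc hf₁ hf₂ hlt hle (hxX _) (hx _)⟩
  refine ⟨a, ha, le_antisymm (mix_le_dualObjective hXc hf₁ hf₂ ha l) ?_, ?_⟩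
  · exact ge_of_tendsto ((hul.mul h₁).add ((tendsto_const_nhds.sub hul).mul h₂))
      (hkey.mono fun k hk => hk.1)
  · exact le_of_tendsto_of_tendsto h₂ h₁ (hkey.mono fun k hk => hk.2)

theorem exists_mix_eq_dualObjective_and_le_of_isMinOn [FirstCountableTopology α] (hX : X.Nonempty)
    {l : ℝ} (hmin : IsMinOn (dualObjective X f₁ f₂) (Icc 0 1) l) (hl₀ : 0 ≤ l) (hl₁ : l < 1) :
    ∃ x ∈ X, l * f₁ x + (1 - l) * f₂ x = dualObjective X f₁ f₂ l ∧ f₂ x ≤ f₁ x :=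
  exists_mix_eq_dualObjective_and_le_of_isMinFilter hXc hf₁ hf₂ hX
    (hmin.isMinFilter_nhdsGT hl₀ hl₁)

theorem exists_mix_eq_dualObjective_and_ge_of_isMinOn [FirstCountableTopology α] (hX : X.Nonempty)
    {l : ℝ} (hmin : IsMinOn (dualObjective X f₁ f₂) (Icc 0 1) l) (hl₀ : 0 < l) (hl₁ : l ≤ 1) :
    ∃ x ∈ X, l * f₁ x + (1 - l) * f₂ x = dualObjective X f₁ f₂ l ∧ f₁ x ≤ f₂ x := by
  have hmin' : IsMinOn (dualObjective X f₂ f₁) (Icc 0 1) (1 - l) := by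
    rw [dualObjective_swap]
    exact hmin.comp_mapsTo (fun t ht => ⟨by linarith [ht.2], by linarith [ht.1]⟩)
      (sub_sub_cancel 1 l)
  obtain ⟨x, hx, hxl, hle⟩ := exists_mix_eq_dualObjective_and_le_of_isMinOn hXc hf₂ hf₁ hX hmin'
    (by linarith) (by linarith)
  refine ⟨x, hx, ?_, hle⟩
  rw [dualObjective_swap, Function.comp_apply, sub_sub_cancel] at hxl
  linear_combination hxl

theorem exists_dualObjective_le_min_mix_of_isMinOn [FirstCountableTopology α] (hX : X.Nonempty)
    {l : ℝ} (hl : l ∈ Icc (0:ℝ) 1) (hmin : IsMinOn (dualObjective X f₁ f₂) (Icc 0 1) l) :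
    ∃ w ∈ Icc (0:ℝ) 1, ∃ x₁ ∈ X, ∃ x₂ ∈ X, dualObjective X f₁ f₂ l ≤
      min (w * f₁ x₁ + (1 - w) * f₁ x₂) (w * f₂ x₁ + (1 - w) * f₂ x₂) := by
  rcases hl.1.eq_or_lt with rfl | hl₀
  · obtain ⟨x, hx, hxl, hle⟩ :=
      exists_mix_eq_dualObjective_and_le_of_isMinOn hXc hf₁ hf₂ hX hmin le_rfl zero_lt_one
    exact ⟨1, ⟨zero_le_one, le_rfl⟩, x, hx, x, hx, by simpa [← hxl] using hle⟩
  rcases hl.2.eq_or_lt with rfl | hl₁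
  · obtain ⟨x, hx, hxl, hle⟩ :=
      exists_mix_eq_dualObjective_and_ge_of_isMinOn hXc hf₁ hf₂ hX hmin zero_lt_one le_rfl
    exact ⟨0, ⟨le_rfl, zero_le_one⟩, x, hx, x, hx, by simpa [← hxl] using hle⟩
  obtain ⟨x₁, hx₁, hxl₁, hle₁⟩ :=
    exists_mix_eq_dualObjective_and_le_of_isMinOn hXc hf₁ hf₂ hX hmin hl₀.le hl₁
  obtain ⟨x₂, hx₂, hxl₂, hle₂⟩ :=
    exists_mix_eq_dualObjective_and_ge_of_isMinOn hXc hf₁ hf₂ hX hmin hl₀ hl₁.le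
  obtain ⟨w, hw, hM⟩ := exists_le_min_mix hle₁ hle₂ hxl₁.ge hxl₂.ge
  exact ⟨w, hw, x₁, hx₁, x₂, hx₂, hM⟩

end DualObjective

theorem primal_dual_equality_general
    (X : Set ℝ) (hX : X.Nonempty) (hXc : IsCompact X)
    (f₁ f₂ : ℝ → ℝ) (hf₁ : ContinuousOn f₁ X) (hf₂ : ContinuousOn f₂ X) :
    sSup {v : ℝ | ∃ w ∈ Icc (0:ℝ) 1, ∃ x₁ ∈ X, ∃ x₂ ∈ X,
        v = min (w * f₁ x₁ + (1 - w) * f₁ x₂) (w * f₂ x₁ + (1 - w) * f₂ x₂)} =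
    sInf {v : ℝ | ∃ l ∈ Icc (0:ℝ) 1,
        v = sSup ((fun x => l * f₁ x + (1 - l) * f₂ x) '' X)} := by
  obtain ⟨l, hl, hmin⟩ := (lowerSemicontinuous_dualObjective hXc hf₁ hf₂).lowerSemicontinuousOn
    (Icc 0 1) |>.exists_isMinOn (nonempty_Icc.2 zero_le_one) isCompact_Icc
  obtain ⟨w, hw, x₁, hx₁, x₂, hx₂, hle⟩ :=
    exists_dualObjective_le_min_mix_of_isMinOn hXc hf₁ hf₂ hX hl hmin
  refine (IsGreatest.csSup_eq (a := dualObjective X f₁ f₂ l) ?_).trans (IsLeast.csInf_eq ?_).symm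
  · refine ⟨⟨w, hw, x₁, hx₁, x₂, hx₂, ?_⟩, ?_⟩
    · exact le_antisymm hle (min_mix_le_dualObjective hXc hf₁ hf₂ hw hl hx₁ hx₂)
    · rintro _ ⟨w, hw, x₁, hx₁, x₂, hx₂, rfl⟩
      exact min_mix_le_dualObjective hXc hf₁ hf₂ hw hl hx₁ hx₂
  · refine ⟨⟨l, hl, rfl⟩, ?_⟩
    rintro _ ⟨t, ht, rfl⟩
    exact hmin ht

/-- Strong duality between the primal two-point max–min formulation and the
dual min–max formulation of the sample-complexity lower bound (Theorem 2). -/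
theorem primal_dual_equality
    (X : Set ℝ) (hX : X.Nonempty) (hXc : IsCompact X)
    (f₁ f₂ : ℝ → ℝ) (hf₁ : ContinuousOn f₁ X) (hf₂ : ContinuousOn f₂ X)
    (hf₁pos : ∀ x ∈ X, 0 < f₁ x) (hf₂pos : ∀ x ∈ X, 0 < f₂ x) :
    sSup {v : ℝ | ∃ w ∈ Icc (0:ℝ) 1, ∃ x₁ ∈ X, ∃ x₂ ∈ X,
        v = min (w * f₁ x₁ + (1 - w) * f₁ x₂) (w * f₂ x₁ + (1 - w) * f₂ x₂)} =
    sInf {v : ℝ | ∃ l ∈ Icc (0:ℝ) 1,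
        v = sSup ((fun x => l * f₁ x + (1 - l) * f₂ x) '' X)} :=
  primal_dual_equality_general X hX hXc f₁ f₂ hf₁ hf₂
end

section
/- Let x̲ < x̄ be real numbers and let f₁, f₂ : [x̲, x̄] → ℝ be continuous. Suppose there exist x₁*, x₂* with x̲ ≤ x₁* < x₂* ≤ x̄ such that, for each j ∈ {1,2}, f_j is strictly increasing on [x̲, x_j*] and strictly decreasing on [x_j*, x̄]. (C1) If f₁(x₂*) ≥ f₂(x₂*), then inf over λ ∈ [0,1] of sup over x ∈ [x₁*, x₂*] of ( λ·f₁(x) + (1−λ)·f₂(x) ) equals f₂(x₂*). (C2) Symmetrically, if f₂(x₁*) ≥ f₁(x₁*), then this inf–sup equals f₁(x₁*). -/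
open Set

/-- Proposition 10: in case C1 the dual min–max problem over [x₁*, x₂*] is solved
by a single question at level x₂* with value f₂(x₂*); symmetrically in case C2 it
equals f₁(x₁*). -/
theorem dual_single_question_C1_C2
    (xlo xhi : ℝ) (hlo_hi : xlo < xhi)
    (f₁ f₂ : ℝ → ℝ)
    (hf₁ : ContinuousOn f₁ (Icc xlo xhi)) (hf₂ : ContinuousOn f₂ (Icc xlo xhi))
    (x₁s x₂s : ℝ) (h₁ : xlo ≤ x₁s) (h₁₂ : x₁s < x₂s) (h₂ : x₂s ≤ xhi)
    (hf₁mono : StrictMonoOn f₁ (Icc xlo x₁s)) (hf₁anti : StrictAntiOn f₁ (Icc x₁s xhi))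
    (hf₂mono : StrictMonoOn f₂ (Icc xlo x₂s)) (hf₂anti : StrictAntiOn f₂ (Icc x₂s xhi)) :
    (f₂ x₂s ≤ f₁ x₂s →
      sInf {v : ℝ | ∃ l ∈ Icc (0:ℝ) 1,
          v = sSup ((fun x => l * f₁ x + (1 - l) * f₂ x) '' Icc x₁s x₂s)} = f₂ x₂s) ∧
    (f₁ x₁s ≤ f₂ x₁s →
      sInf {v : ℝ | ∃ l ∈ Icc (0:ℝ) 1,
          v = sSup ((fun x => l * f₁ x + (1 - l) * f₂ x) '' Icc x₁s x₂s)} = f₁ x₁s) := by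
  have hsub : Icc x₁s x₂s ⊆ Icc xlo xhi := Icc_subset_Icc h₁ h₂
  have hmem₂ : x₂s ∈ Icc x₁s x₂s := ⟨le_of_lt h₁₂, le_refl _⟩
  have hmem₁ : x₁s ∈ Icc x₁s x₂s := ⟨le_refl _, le_of_lt h₁₂⟩
  have hcont : ∀ l : ℝ, ContinuousOn (fun x => l * f₁ x + (1 - l) * f₂ x) (Icc x₁s x₂s) :=
    fun l => (continuousOn_const.mul (hf₁.mono hsub)).add
      (continuousOn_const.mul (hf₂.mono hsub))
  have hbdd : ∀ l : ℝ, BddAbove ((fun x => l * f₁ x + (1 - l) * f₂ x) '' Icc x₁s x₂s) :=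
    fun l => (isCompact_Icc.image_of_continuousOn (hcont l)).bddAbove
  -- f₂ x ≤ f₂ x₂s on the interval
  have hb₂ : ∀ x ∈ Icc x₁s x₂s, f₂ x ≤ f₂ x₂s := fun x hx =>
    hf₂mono.monotoneOn ⟨h₁.trans hx.1, hx.2⟩ ⟨h₁.trans (le_of_lt h₁₂), le_refl _⟩ hx.2
  -- f₁ x ≤ f₁ x₁s on the interval
  have hb₁ : ∀ x ∈ Icc x₁s x₂s, f₁ x ≤ f₁ x₁s := fun x hx =>
    hf₁anti.antitoneOn ⟨le_refl _, (le_of_lt h₁₂).trans h₂⟩ ⟨hx.1, hx.2.trans h₂⟩ hx.1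
  constructor
  · intro hC1
    -- at l = 0, the sup is f₂ x₂s
    have hS0 : sSup ((fun x => (0:ℝ) * f₁ x + (1 - 0) * f₂ x) '' Icc x₁s x₂s) = f₂ x₂s := by
      apply IsGreatest.csSup_eq
      constructor
      · refine ⟨x₂s, hmem₂, ?_⟩; ring
      · rintro v ⟨x, hx, rfl⟩
        have := hb₂ x hx
        simp only
        linarith
    have hmemset : f₂ x₂s ∈ {v : ℝ | ∃ l ∈ Icc (0:ℝ) 1,
        v = sSup ((fun x => l * f₁ x + (1 - l) * f₂ x) '' Icc x₁s x₂s)} :=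
      ⟨0, ⟨le_refl _, zero_le_one⟩, hS0.symm⟩
    have hlb : ∀ v ∈ {v : ℝ | ∃ l ∈ Icc (0:ℝ) 1,
        v = sSup ((fun x => l * f₁ x + (1 - l) * f₂ x) '' Icc x₁s x₂s)}, f₂ x₂s ≤ v := by
      rintro v ⟨l, hl, rfl⟩
      have hpt : l * f₁ x₂s + (1 - l) * f₂ x₂s ≤
          sSup ((fun x => l * f₁ x + (1 - l) * f₂ x) '' Icc x₁s x₂s) :=
        le_csSup (hbdd l) ⟨x₂s, hmem₂, rfl⟩
      nlinarith [hl.1, hl.2]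
    exact le_antisymm (csInf_le ⟨f₂ x₂s, hlb⟩ hmemset) (le_csInf ⟨_, hmemset⟩ hlb)
  · intro hC2
    -- at l = 1, the sup is f₁ x₁s
    have hS1 : sSup ((fun x => (1:ℝ) * f₁ x + (1 - 1) * f₂ x) '' Icc x₁s x₂s) = f₁ x₁s := by
      apply IsGreatest.csSup_eq
      constructor
      · refine ⟨x₁s, hmem₁, ?_⟩; ring
      · rintro v ⟨x, hx, rfl⟩
        have := hb₁ x hx
        simp only
        linarith
    have hmemset : f₁ x₁s ∈ {v : ℝ | ∃ l ∈ Icc (0:ℝ) 1,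
        v = sSup ((fun x => l * f₁ x + (1 - l) * f₂ x) '' Icc x₁s x₂s)} :=
      ⟨1, ⟨zero_le_one, le_refl _⟩, hS1.symm⟩
    have hlb : ∀ v ∈ {v : ℝ | ∃ l ∈ Icc (0:ℝ) 1,
        v = sSup ((fun x => l * f₁ x + (1 - l) * f₂ x) '' Icc x₁s x₂s)}, f₁ x₁s ≤ v := by
      rintro v ⟨l, hl, rfl⟩
      have hpt : l * f₁ x₁s + (1 - l) * f₂ x₁s ≤
          sSup ((fun x => l * f₁ x + (1 - l) * f₂ x) '' Icc x₁s x₂s) :=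
        le_csSup (hbdd l) ⟨x₁s, hmem₁, rfl⟩
      nlinarith [hl.1, hl.2]
    exact le_antisymm (csInf_le ⟨f₁ x₁s, hlb⟩ hmemset) (le_csInf ⟨_, hmemset⟩ hlb)
end

section
/- Let x̲ ≤ x₁* < x₂* ≤ x̄ and let f₁, f₂ : [x̲, x̄] → ℝ be continuously differentiable with, for each j ∈ {1,2}, f_j'(x) > 0 for x < x_j* and f_j'(x) < 0 for x > x_j*. Suppose the ratio x ↦ f₁'(x)/f₂'(x) is strictly decreasing on (x₁*, x₂*). Then for every λ ∈ [0,1], the function Q(·,λ) : x ↦ λ·f₁(x) + (1−λ)·f₂(x) is quasi-concave on [x₁*, x₂*]; that is, for all x ≤ y ≤ z in [x₁*, x₂*], Q(y,λ) ≥ min( Q(x,λ), Q(z,λ) ). -/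
/-!
On `(x₁*, x₂*)` we have `f₂' > 0`, so the derivative of `Q = λ f₁ + (1 - λ) f₂` factors as
`f₂' · (λ · f₁'/f₂' + (1 - λ))`. The second factor is antitone, hence once `Q'` is negative it
stays negative. By the mean value theorem, a violation `Q y < min (Q x) (Q z)` would give a point
of `(x, y)` where `Q' < 0` followed by a point of `(y, z)` where `Q' > 0`.
-/

open Set

theorem min_le_of_hasDerivAt_of_neg_imp_nonpos {Q Q' : ℝ → ℝ} {a b x y z : ℝ}
    (hQc : ContinuousOn Q (Icc a b)) (hQd : ∀ t ∈ Ioo a b, HasDerivAt Q (Q' t) t)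
    (hsign : ∀ u ∈ Ioo a b, ∀ v ∈ Ioo a b, u < v → Q' u < 0 → Q' v ≤ 0)
    (hx : x ∈ Icc a b) (hz : z ∈ Icc a b) (hxy : x ≤ y) (hyz : y ≤ z) :
    min (Q x) (Q z) ≤ Q y := by
  by_contra! hcon
  obtain ⟨hQx, hQz⟩ := lt_min_iff.mp hcon
  have hxy' : x < y := hxy.lt_of_ne (by rintro rfl; exact hQx.false)
  have hyz' : y < z := hyz.lt_of_ne (by rintro rfl; exact hQz.false)
  obtain ⟨u, hu, hu'⟩ := exists_hasDerivAt_eq_slope Q Q' hxy'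
    (hQc.mono (Icc_subset_Icc hx.1 (hyz.trans hz.2)))
    (fun t ht => hQd t ⟨hx.1.trans_lt ht.1, ht.2.trans_le (hyz.trans hz.2)⟩)
  obtain ⟨v, hv, hv'⟩ := exists_hasDerivAt_eq_slope Q Q' hyz'
    (hQc.mono (Icc_subset_Icc (hx.1.trans hxy) hz.2))
    (fun t ht => hQd t ⟨(hx.1.trans hxy).trans_lt ht.1, ht.2.trans_le hz.2⟩)
  have hQu : Q' u < 0 := hu' ▸ div_neg_of_neg_of_pos (sub_neg.mpr hQx) (sub_pos.mpr hxy')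
  have hQv : 0 < Q' v := hv' ▸ div_pos (sub_pos.mpr hQz) (sub_pos.mpr hyz')
  have hu_mem : u ∈ Ioo a b := ⟨hx.1.trans_lt hu.1, hu.2.trans_le (hyz.trans hz.2)⟩
  have hv_mem : v ∈ Ioo a b := ⟨(hx.1.trans hxy).trans_lt hv.1, hv.2.trans_le hz.2⟩
  exact (hsign u hu_mem v hv_mem (hu.2.trans hv.1) hQu).not_gt hQv

theorem linear_combination_neg_of_le_of_antitoneOn_div {g₁ g₂ : ℝ → ℝ} {s : Set ℝ}
    {a b u v : ℝ} (ha : 0 ≤ a) (hpos : ∀ t ∈ s, 0 < g₂ t)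
    (hratio : AntitoneOn (fun t => g₁ t / g₂ t) s) (hu : u ∈ s) (hv : v ∈ s) (huv : u ≤ v)
    (hneg : a * g₁ u + b * g₂ u < 0) :
    a * g₁ v + b * g₂ v < 0 := by
  have factor : ∀ t ∈ s, a * g₁ t + b * g₂ t = g₂ t * (a * (g₁ t / g₂ t) + b) := by
    intro t ht
    field_simp [(hpos t ht).ne']
  rw [factor u hu] at hneg
  rw [factor v hv]
  have hcoef_u : a * (g₁ u / g₂ u) + b < 0 := neg_of_mul_neg_right hneg (hpos u hu).le
  have hcoef_v : a * (g₁ v / g₂ v) + b < 0 := by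
    have := mul_le_mul_of_nonneg_left (hratio hu hv huv) ha
    linarith
  exact mul_neg_of_pos_of_neg (hpos v hv) hcoef_v

theorem convex_combination_quasiconcave_general
    (xlo xhi x₁s x₂s : ℝ) (h₁ : xlo ≤ x₁s) (h₂ : x₂s ≤ xhi)
    (f₁ f₂ f₁' f₂' : ℝ → ℝ)
    (hd₁ : ∀ x ∈ Icc xlo xhi, HasDerivWithinAt f₁ (f₁' x) (Icc xlo xhi) x)
    (hd₂ : ∀ x ∈ Icc xlo xhi, HasDerivWithinAt f₂ (f₂' x) (Icc xlo xhi) x)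
    (hs₂p : ∀ x ∈ Icc xlo xhi, x < x₂s → 0 < f₂' x)
    (hratio : StrictAntiOn (fun x => f₁' x / f₂' x) (Ioo x₁s x₂s)) :
    ∀ l ∈ Icc (0:ℝ) 1, ∀ x ∈ Icc x₁s x₂s, ∀ y ∈ Icc x₁s x₂s, ∀ z ∈ Icc x₁s x₂s,
      x ≤ y → y ≤ z →
      min (l * f₁ x + (1 - l) * f₂ x) (l * f₁ z + (1 - l) * f₂ z) ≤
        l * f₁ y + (1 - l) * f₂ y := by
  intro l hl x hx y _ z hz hxy hyz
  have hsub : Icc x₁s x₂s ⊆ Icc xlo xhi := Icc_subset_Icc h₁ h₂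
  have hpos : ∀ t ∈ Ioo x₁s x₂s, 0 < f₂' t :=
    fun t ht => hs₂p t (hsub (Ioo_subset_Icc_self ht)) ht.2
  refine min_le_of_hasDerivAt_of_neg_imp_nonpos (a := x₁s) (b := x₂s)
    (Q := fun t => l * f₁ t + (1 - l) * f₂ t) (Q' := fun t => l * f₁' t + (1 - l) * f₂' t)
    ?_ ?_ ?_ hx hz hxy hyz
  · exact ((continuousOn_const.mul fun t ht => (hd₁ t ht).continuousWithinAt).add
      (continuousOn_const.mul fun t ht => (hd₂ t ht).continuousWithinAt)).mono hsub
  · intro t ht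
    have hnhds : Icc xlo xhi ∈ nhds t := Icc_mem_nhds (h₁.trans_lt ht.1) (ht.2.trans_le h₂)
    have htI : t ∈ Icc xlo xhi := hsub (Ioo_subset_Icc_self ht)
    exact ((hd₁ t htI).hasDerivAt hnhds).const_mul l |>.add
      (((hd₂ t htI).hasDerivAt hnhds).const_mul (1 - l))
  · exact fun u hu v hv huv hneg => (linear_combination_neg_of_le_of_antitoneOn_div hl.1 hpos
      hratio.antitoneOn hu hv huv.le hneg).le

/-- Proposition 11 (first part): if the derivative ratio f₁'/f₂' is strictly
decreasing on (x₁*, x₂*), then every convex combination λ·f₁ + (1−λ)·f₂ is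
quasi-concave on [x₁*, x₂*]. -/
theorem convex_combination_quasiconcave
    (xlo xhi x₁s x₂s : ℝ) (h₁ : xlo ≤ x₁s) (h₁₂ : x₁s < x₂s) (h₂ : x₂s ≤ xhi)
    (f₁ f₂ f₁' f₂' : ℝ → ℝ)
    (hd₁ : ∀ x ∈ Icc xlo xhi, HasDerivWithinAt f₁ (f₁' x) (Icc xlo xhi) x)
    (hd₂ : ∀ x ∈ Icc xlo xhi, HasDerivWithinAt f₂ (f₂' x) (Icc xlo xhi) x)
    (hc₁ : ContinuousOn f₁' (Icc xlo xhi)) (hc₂ : ContinuousOn f₂' (Icc xlo xhi))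
    (hs₁p : ∀ x ∈ Icc xlo xhi, x < x₁s → 0 < f₁' x)
    (hs₁n : ∀ x ∈ Icc xlo xhi, x₁s < x → f₁' x < 0)
    (hs₂p : ∀ x ∈ Icc xlo xhi, x < x₂s → 0 < f₂' x)
    (hs₂n : ∀ x ∈ Icc xlo xhi, x₂s < x → f₂' x < 0)
    (hratio : StrictAntiOn (fun x => f₁' x / f₂' x) (Ioo x₁s x₂s)) :
    ∀ l ∈ Icc (0:ℝ) 1, ∀ x ∈ Icc x₁s x₂s, ∀ y ∈ Icc x₁s x₂s, ∀ z ∈ Icc x₁s x₂s,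
      x ≤ y → y ≤ z →
      min (l * f₁ x + (1 - l) * f₂ x) (l * f₁ z + (1 - l) * f₂ z) ≤
        l * f₁ y + (1 - l) * f₂ y :=
  convex_combination_quasiconcave_general xlo xhi x₁s x₂s h₁ h₂ f₁ f₂ f₁' f₂' hd₁ hd₂ hs₂p hratio
end

section
/- Let x̲ ≤ x₁* < x₂* ≤ x̄ and let f₁, f₂ : [x̲, x̄] → ℝ be continuously differentiable with, for each j ∈ {1,2}, f_j'(x) > 0 for x < x_j* and f_j'(x) < 0 for x > x_j*, and suppose x ↦ f₁'(x)/f₂'(x) is strictly decreasing on (x₁*, x₂*). If moreover f₁(x₂*) < f₂(x₂*) and f₂(x₁*) < f₁(x₁*) (case C3), then there is a unique point x̄₀ ∈ (x₁*, x₂*) with f₁(x̄₀) = f₂(x̄₀), and inf over λ ∈ [0,1] of sup over x ∈ [x₁*, x₂*] of ( λ·f₁(x) + (1−λ)·f₂(x) ) equals f₁(x̄₀). -/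
/-!
On `[x₁*, x₂*]` the function `f₁` decreases and `f₂` increases, so they cross exactly once,
at `x̄₀`. Every mixture `λ f₁ + (1 - λ) f₂` takes the value `f₁ x̄₀` at `x̄₀`, so the inf-sup
is at least `f₁ x̄₀`. For the weight `λ = f₂'(x̄₀) / (f₂'(x̄₀) - f₁'(x̄₀))` the derivative of
the mixture is a positive multiple of `f₁'/f₂' (x) - f₁'/f₂' (x̄₀)`, which changes sign from
`+` to `-` at `x̄₀`; so this mixture peaks at `x̄₀` and the bound is attained.
-/

open Set

section Calculus

variable {f f' : ℝ → ℝ} {a b c : ℝ}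

lemma strictMonoOn_Icc_of_hasDerivWithinAt_pos
    (hf : ∀ x ∈ Icc a b, HasDerivWithinAt f (f' x) (Icc a b) x)
    (hpos : ∀ x ∈ Ioo a b, 0 < f' x) : StrictMonoOn f (Icc a b) :=
  strictMonoOn_of_hasDerivWithinAt_pos (convex_Icc a b)
    (fun x hx => (hf x hx).continuousWithinAt)
    (fun x hx => by
      rw [interior_Icc] at hx ⊢
      exact (hf x (Ioo_subset_Icc_self hx)).mono Ioo_subset_Icc_self)
    (fun x hx => hpos x (by rwa [interior_Icc] at hx))

lemma strictAntiOn_Icc_of_hasDerivWithinAt_neg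
    (hf : ∀ x ∈ Icc a b, HasDerivWithinAt f (f' x) (Icc a b) x)
    (hneg : ∀ x ∈ Ioo a b, f' x < 0) : StrictAntiOn f (Icc a b) :=
  strictAntiOn_of_hasDerivWithinAt_neg (convex_Icc a b)
    (fun x hx => (hf x hx).continuousWithinAt)
    (fun x hx => by
      rw [interior_Icc] at hx ⊢
      exact (hf x (Ioo_subset_Icc_self hx)).mono Ioo_subset_Icc_self)
    (fun x hx => hneg x (by rwa [interior_Icc] at hx))

lemma isMaxOn_Icc_of_hasDerivWithinAt_pos_neg (hc : c ∈ Icc a b)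
    (hf : ∀ x ∈ Icc a b, HasDerivWithinAt f (f' x) (Icc a b) x)
    (hpos : ∀ x ∈ Ioo a c, 0 < f' x) (hneg : ∀ x ∈ Ioo c b, f' x < 0) :
    IsMaxOn f (Icc a b) c := by
  have hac : Icc a c ⊆ Icc a b := Icc_subset_Icc_right hc.2
  have hcb : Icc c b ⊆ Icc a b := Icc_subset_Icc_left hc.1
  have hmono : StrictMonoOn f (Icc a c) :=
    strictMonoOn_Icc_of_hasDerivWithinAt_pos (fun x hx => (hf x (hac hx)).mono hac) hpos
  have hanti : StrictAntiOn f (Icc c b) :=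
    strictAntiOn_Icc_of_hasDerivWithinAt_neg (fun x hx => (hf x (hcb hx)).mono hcb) hneg
  intro x hx
  rcases le_total x c with hxc | hcx
  · exact hmono.monotoneOn ⟨hx.1, hxc⟩ ⟨hc.1, le_rfl⟩ hxc
  · exact hanti.antitoneOn ⟨le_rfl, hc.2⟩ ⟨hcx, hx.2⟩ hcx

end Calculus

lemma existsUnique_crossing_of_strictAntiOn_of_strictMonoOn {f g : ℝ → ℝ} {a b : ℝ}
    (hab : a ≤ b) (hf : ContinuousOn f (Icc a b)) (hg : ContinuousOn g (Icc a b))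
    (hf_anti : StrictAntiOn f (Icc a b)) (hg_mono : StrictMonoOn g (Icc a b))
    (ha : g a < f a) (hb : f b < g b) :
    ∃ x ∈ Ioo a b, f x = g x ∧ ∀ y ∈ Icc a b, f y = g y → y = x := by
  have hdiff : StrictAntiOn (fun x => f x - g x) (Icc a b) :=
    fun x hx y hy hxy => sub_lt_sub (hf_anti hx hy hxy) (hg_mono hx hy hxy)
  have hzero : (0 : ℝ) ∈ Ioo (f b - g b) (f a - g a) := ⟨by linarith, by linarith⟩
  obtain ⟨x, hx, hfx⟩ := intermediate_value_Ioo' hab (hf.sub hg) hzero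
  refine ⟨x, hx, sub_eq_zero.mp hfx, fun y hy hfy => ?_⟩
  refine hdiff.injOn hy (Ioo_subset_Icc_self hx) ?_
  rw [hfy, sub_self]
  exact hfx.symm

lemma mul_add_one_sub_mul_eq (p q p₀ q₀ : ℝ) (hq : q ≠ 0) (hq₀ : q₀ ≠ 0) (hd : q₀ - p₀ ≠ 0) :
    q₀ / (q₀ - p₀) * p + (1 - q₀ / (q₀ - p₀)) * q = q * q₀ / (q₀ - p₀) * (p / q - p₀ / q₀) := by
  field_simp
  ring

lemma isMaxOn_mixture_of_strictAntiOn_deriv_ratio {f₁ f₂ f₁' f₂' : ℝ → ℝ} {a b c : ℝ}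
    (hd₁ : ∀ x ∈ Icc a b, HasDerivWithinAt f₁ (f₁' x) (Icc a b) x)
    (hd₂ : ∀ x ∈ Icc a b, HasDerivWithinAt f₂ (f₂' x) (Icc a b) x)
    (hf₂' : ∀ x ∈ Ioo a b, 0 < f₂' x)
    (hratio : StrictAntiOn (fun x => f₁' x / f₂' x) (Ioo a b))
    (hc : c ∈ Ioo a b) (hf₁'c : f₁' c < 0) :
    IsMaxOn (fun x => f₂' c / (f₂' c - f₁' c) * f₁ x + (1 - f₂' c / (f₂' c - f₁' c)) * f₂ x)
      (Icc a b) c := by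
  set l := f₂' c / (f₂' c - f₁' c)
  have hgap : 0 < f₂' c - f₁' c := by linarith [hf₂' c hc]
  have hderiv : ∀ x ∈ Ioo a b, l * f₁' x + (1 - l) * f₂' x
      = f₂' x * f₂' c / (f₂' c - f₁' c) * (f₁' x / f₂' x - f₁' c / f₂' c) := fun x hx =>
    mul_add_one_sub_mul_eq _ _ _ _ (hf₂' x hx).ne' (hf₂' c hc).ne' hgap.ne'
  have hscale : ∀ x ∈ Ioo a b, 0 < f₂' x * f₂' c / (f₂' c - f₁' c) := fun x hx =>
    div_pos (mul_pos (hf₂' x hx) (hf₂' c hc)) hgap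
  apply isMaxOn_Icc_of_hasDerivWithinAt_pos_neg (Ioo_subset_Icc_self hc)
    (fun x hx => ((hd₁ x hx).const_mul l).add ((hd₂ x hx).const_mul (1 - l)))
  · intro x hx
    have hxab : x ∈ Ioo a b := ⟨hx.1, hx.2.trans hc.2⟩
    rw [hderiv x hxab]
    exact mul_pos (hscale x hxab) (sub_pos.mpr (hratio hxab hc hx.2))
  · intro x hx
    have hxab : x ∈ Ioo a b := ⟨hc.1.trans hx.1, hx.2⟩
    rw [hderiv x hxab]
    exact mul_neg_of_pos_of_neg (hscale x hxab) (sub_neg.mpr (hratio hc hxab hx.1))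

lemma sInf_sSup_eq_of_isMaxOn_of_forall_eq {ι α : Type*} {F : ι → α → ℝ} {L : Set ι}
    {S : Set α} {l₀ : ι} {x₀ : α} {v₀ : ℝ} (hl₀ : l₀ ∈ L) (hx₀ : x₀ ∈ S)
    (hbdd : ∀ l ∈ L, BddAbove (F l '' S)) (hval : ∀ l ∈ L, F l x₀ = v₀)
    (hmax : IsMaxOn (F l₀) S x₀) :
    sInf {v : ℝ | ∃ l ∈ L, v = sSup (F l '' S)} = v₀ := by
  have hgreatest : IsGreatest (F l₀ '' S) v₀ := by
    refine ⟨⟨x₀, hx₀, hval l₀ hl₀⟩, ?_⟩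
    rintro _ ⟨x, hx, rfl⟩
    exact hval l₀ hl₀ ▸ hmax hx
  refine IsLeast.csInf_eq ⟨⟨l₀, hl₀, hgreatest.csSup_eq.symm⟩, ?_⟩
  rintro _ ⟨l, hl, rfl⟩
  exact hval l hl ▸ le_csSup (hbdd l hl) ⟨x₀, hx₀, rfl⟩

theorem dual_single_question_C3_general
    (xlo xhi x₁s x₂s : ℝ) (h₁ : xlo ≤ x₁s) (h₁₂ : x₁s < x₂s) (h₂ : x₂s ≤ xhi)
    (f₁ f₂ f₁' f₂' : ℝ → ℝ)
    (hd₁ : ∀ x ∈ Icc xlo xhi, HasDerivWithinAt f₁ (f₁' x) (Icc xlo xhi) x)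
    (hd₂ : ∀ x ∈ Icc xlo xhi, HasDerivWithinAt f₂ (f₂' x) (Icc xlo xhi) x)
    (hs₁n : ∀ x ∈ Icc xlo xhi, x₁s < x → f₁' x < 0)
    (hs₂p : ∀ x ∈ Icc xlo xhi, x < x₂s → 0 < f₂' x)
    (hratio : StrictAntiOn (fun x => f₁' x / f₂' x) (Ioo x₁s x₂s))
    (hC3a : f₁ x₂s < f₂ x₂s) (hC3b : f₂ x₁s < f₁ x₁s) :
    ∃ x₀ ∈ Ioo x₁s x₂s, f₁ x₀ = f₂ x₀ ∧
      (∀ y ∈ Ioo x₁s x₂s, f₁ y = f₂ y → y = x₀) ∧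
      sInf {v : ℝ | ∃ l ∈ Icc (0:ℝ) 1,
          v = sSup ((fun x => l * f₁ x + (1 - l) * f₂ x) '' Icc x₁s x₂s)} = f₁ x₀ := by
  have hsub : Icc x₁s x₂s ⊆ Icc xlo xhi := Icc_subset_Icc h₁ h₂
  have hd₁' : ∀ x ∈ Icc x₁s x₂s, HasDerivWithinAt f₁ (f₁' x) (Icc x₁s x₂s) x :=
    fun x hx => (hd₁ x (hsub hx)).mono hsub
  have hd₂' : ∀ x ∈ Icc x₁s x₂s, HasDerivWithinAt f₂ (f₂' x) (Icc x₁s x₂s) x :=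
    fun x hx => (hd₂ x (hsub hx)).mono hsub
  have hf₁' : ∀ x ∈ Ioo x₁s x₂s, f₁' x < 0 :=
    fun x hx => hs₁n x (hsub (Ioo_subset_Icc_self hx)) hx.1
  have hf₂' : ∀ x ∈ Ioo x₁s x₂s, 0 < f₂' x :=
    fun x hx => hs₂p x (hsub (Ioo_subset_Icc_self hx)) hx.2
  have hcont₁ : ContinuousOn f₁ (Icc x₁s x₂s) := fun x hx => (hd₁' x hx).continuousWithinAt
  have hcont₂ : ContinuousOn f₂ (Icc x₁s x₂s) := fun x hx => (hd₂' x hx).continuousWithinAt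
  obtain ⟨x₀, hx₀, hcross, huniq⟩ :=
    existsUnique_crossing_of_strictAntiOn_of_strictMonoOn h₁₂.le hcont₁ hcont₂
      (strictAntiOn_Icc_of_hasDerivWithinAt_neg hd₁' hf₁')
      (strictMonoOn_Icc_of_hasDerivWithinAt_pos hd₂' hf₂') hC3b hC3a
  refine ⟨x₀, hx₀, hcross, fun y hy => huniq y (Ioo_subset_Icc_self hy), ?_⟩
  have hgap : 0 < f₂' x₀ - f₁' x₀ := by linarith [hf₁' x₀ hx₀, hf₂' x₀ hx₀]
  have hweight : f₂' x₀ / (f₂' x₀ - f₁' x₀) ∈ Icc (0 : ℝ) 1 :=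
    ⟨(div_pos (hf₂' x₀ hx₀) hgap).le, (div_le_one hgap).mpr (by linarith [hf₁' x₀ hx₀])⟩
  refine sInf_sSup_eq_of_isMaxOn_of_forall_eq (F := fun l x => l * f₁ x + (1 - l) * f₂ x)
    hweight (Ioo_subset_Icc_self hx₀) (fun l _ => ?_) (fun l _ => by rw [hcross]; ring)
    (isMaxOn_mixture_of_strictAntiOn_deriv_ratio hd₁' hd₂' hf₂' hratio hx₀ (hf₁' x₀ hx₀))
  exact (isCompact_Icc.image_of_continuousOn
    ((continuousOn_const.mul hcont₁).add (continuousOn_const.mul hcont₂))).bddAbove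

/-- Proposition 11 (second part): in case C3 with a strictly decreasing derivative
ratio, there is a unique crossing point x̄₀ ∈ (x₁*, x₂*) of f₁ and f₂, and the dual
min–max lower-bound problem is solved by x̄₀ with value f₁(x̄₀). -/
theorem dual_single_question_C3
    (xlo xhi x₁s x₂s : ℝ) (h₁ : xlo ≤ x₁s) (h₁₂ : x₁s < x₂s) (h₂ : x₂s ≤ xhi)
    (f₁ f₂ f₁' f₂' : ℝ → ℝ)
    (hd₁ : ∀ x ∈ Icc xlo xhi, HasDerivWithinAt f₁ (f₁' x) (Icc xlo xhi) x)
    (hd₂ : ∀ x ∈ Icc xlo xhi, HasDerivWithinAt f₂ (f₂' x) (Icc xlo xhi) x)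
    (hc₁ : ContinuousOn f₁' (Icc xlo xhi)) (hc₂ : ContinuousOn f₂' (Icc xlo xhi))
    (hs₁p : ∀ x ∈ Icc xlo xhi, x < x₁s → 0 < f₁' x)
    (hs₁n : ∀ x ∈ Icc xlo xhi, x₁s < x → f₁' x < 0)
    (hs₂p : ∀ x ∈ Icc xlo xhi, x < x₂s → 0 < f₂' x)
    (hs₂n : ∀ x ∈ Icc xlo xhi, x₂s < x → f₂' x < 0)
    (hratio : StrictAntiOn (fun x => f₁' x / f₂' x) (Ioo x₁s x₂s))
    (hC3a : f₁ x₂s < f₂ x₂s) (hC3b : f₂ x₁s < f₁ x₁s) :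
    ∃ x₀ ∈ Ioo x₁s x₂s, f₁ x₀ = f₂ x₀ ∧
      (∀ y ∈ Ioo x₁s x₂s, f₁ y = f₂ y → y = x₀) ∧
      sInf {v : ℝ | ∃ l ∈ Icc (0:ℝ) 1,
          v = sSup ((fun x => l * f₁ x + (1 - l) * f₂ x) '' Icc x₁s x₂s)} = f₁ x₀ :=
  dual_single_question_C3_general xlo xhi x₁s x₂s h₁ h₁₂ h₂ f₁ f₂ f₁' f₂' hd₁ hd₂ hs₁n hs₂p hratio
    hC3a hC3b
end

section
/- Let 0 < u₁ < p < u₂. For q, x > 0 set h(x,q) = q/(q+x), and for j = 1,2 set f_j(x) = d( h(x,p) | h(x,u_j) ), where d(q|r) = q·log(q/r) + (1−q)·log((1−q)/(1−r)). Set a_j = p − u_j + p·log(u_j/p), b_j = p² + u_j·p·(log(u_j/p) − 1), and x_j* = −b_j/a_j. Then the ratio H(x) = f₁'(x)/f₂'(x) is strictly decreasing on (x₁*, x₂*): for all x, y with x₁* < x < y < x₂*, f₁'(x)/f₂'(x) > f₁'(y)/f₂'(y). -/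
/-!
For `x > 0` the divergence along the curve is `p log(p/u)/(p+x) + log(u+x) - log(p+x)`, whose
derivative is `(a x + b)/((u+x)(p+x)²) = a (x - x*)/((u+x)(p+x)²)`. Hence on `(x₁*, x₂*)`
`f₁'/f₂' = -(a₁/a₂) · (x - x₁*)/(u₁ + x) · (u₂ + x)/(x₂* - x)`.
Both `a_j` are negative and `b₁ > 0` (each is a multiple of `log t - t + 1` for some `t ≠ 1`),
so `a₁/a₂ > 0` and `x₁* > 0`; as `u₁ + x₁* > 0` and `u₂ + x₂* > 0`, the two Möbius factors are
positive and strictly increasing on `(x₁*, x₂*)`.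
-/

/-- Kullback–Leibler divergence between Bernoulli distributions with means `q` and `r`. -/
noncomputable def klBern (q r : ℝ) : ℝ :=
  q * Real.log (q / r) + (1 - q) * Real.log ((1 - q) / (1 - r))

open Real

lemma klBern_div_add_div_add {p u z : ℝ} (hp : 0 < p) (hu : 0 < u) (hz : 0 < z) :
    klBern (p / (p + z)) (u / (u + z)) =
      p * (log p - log u) / (p + z) + log (u + z) - log (p + z) := by
  have hsub_p : 1 - p / (p + z) = z / (p + z) := by field_simp; ring
  have hsub_u : 1 - u / (u + z) = z / (u + z) := by field_simp; ring
  have hmean : p / (p + z) / (u / (u + z)) = p * (u + z) / (u * (p + z)) := by field_simp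
  have hcomp : z / (p + z) / (z / (u + z)) = (u + z) / (p + z) := by
    rw [div_div_div_cancel_left' _ _ hz.ne']
  rw [klBern, hsub_p, hsub_u, hmean, hcomp, log_div (by positivity) (by positivity),
    log_div (by positivity) (by positivity), log_mul hp.ne' (by positivity),
    log_mul hu.ne' (by positivity)]
  field_simp
  ring

lemma hasDerivAt_klBern_div_add_div_add {p u x : ℝ} (hp : 0 < p) (hu : 0 < u) (hx : 0 < x) :
    HasDerivAt (fun z => klBern (p / (p + z)) (u / (u + z)))
      (((p - u + p * log (u / p)) * x + (p ^ 2 + u * p * (log (u / p) - 1))) /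
        ((u + x) * (p + x) ^ 2)) x := by
  have hpx : 0 < p + x := by linarith
  have hux : 0 < u + x := by linarith
  have hp' : HasDerivAt (fun z => p + z) 1 x := (hasDerivAt_id x).const_add p
  have hu' : HasDerivAt (fun z => u + z) 1 x := (hasDerivAt_id x).const_add u
  have hclosed := (((hp'.inv hpx.ne').const_mul (p * (log p - log u))).add
    (hu'.log hux.ne')).sub (hp'.log hpx.ne')
  refine (hclosed.congr_of_eventuallyEq ?_).congr_deriv ?_
  · filter_upwards [eventually_gt_nhds hx] with z hz
    rw [klBern_div_add_div_add hp hu hz, div_eq_mul_inv]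
    rfl
  · rw [log_div hu.ne' hp.ne']
    field_simp
    ring

lemma sub_add_mul_log_div_neg {p u : ℝ} (hp : 0 < p) (hu : 0 < u) (hne : u ≠ p) :
    p - u + p * log (u / p) < 0 := by
  have hlog := log_lt_sub_one_of_pos (div_pos hu hp) (div_ne_one_of_ne hne)
  have hscaled : p * log (u / p) < p * (u / p - 1) := mul_lt_mul_of_pos_left hlog hp
  rw [mul_sub, mul_div_cancel₀ _ hp.ne', mul_one] at hscaled
  linarith

lemma sq_add_mul_mul_log_div_sub_one_pos {p u : ℝ} (hp : 0 < p) (hu : 0 < u) (hne : u ≠ p) :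
    0 < p ^ 2 + u * p * (log (u / p) - 1) := by
  have hlog := log_lt_sub_one_of_pos (div_pos hp hu) (div_ne_one_of_ne hne.symm)
  rw [log_div hp.ne' hu.ne'] at hlog
  have hscaled : u * p * (-(p / u)) < u * p * (log (u / p) - 1) := by
    rw [log_div hu.ne' hp.ne']
    exact mul_lt_mul_of_pos_left (by linarith) (by positivity)
  have hsq : u * p * (-(p / u)) = -p ^ 2 := by field_simp
  linarith

lemma deriv_klBern_div_add_div_add {p u a b s x : ℝ} (hp : 0 < p) (hu : 0 < u) (hne : u ≠ p)
    (ha : a = p - u + p * log (u / p)) (hb : b = p ^ 2 + u * p * (log (u / p) - 1))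
    (hs : s = -b / a) (hx : 0 < x) :
    deriv (fun z => klBern (p / (p + z)) (u / (u + z))) x =
      a * (x - s) / ((u + x) * (p + x) ^ 2) := by
  have ha_ne : a ≠ 0 := ha ▸ (sub_add_mul_log_div_neg hp hu hne).ne
  rw [(hasDerivAt_klBern_div_add_div_add hp hu hx).deriv, ← ha, ← hb, hs]
  field_simp
  ring

lemma sub_div_add_lt_sub_div_add {s u x y : ℝ} (hs : -u < s) (hx : -u < x) (hxy : x < y) :
    (x - s) / (u + x) < (y - s) / (u + y) := by
  rw [div_lt_div_iff₀ (by linarith) (by linarith)]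
  nlinarith [mul_pos (sub_pos.2 hxy) (neg_lt_iff_pos_add.1 hs)]

lemma add_div_sub_lt_add_div_sub {t u x y : ℝ} (ht : -u < t) (hxy : x < y) (hy : y < t) :
    (u + x) / (t - x) < (u + y) / (t - y) := by
  rw [div_lt_div_iff₀ (by linarith) (by linarith)]
  nlinarith [mul_pos (sub_pos.2 hxy) (neg_lt_iff_pos_add.1 ht)]

/-- Theorem 13(a) for h(x,p) = p/(p+x): the ratio f₁'/f₂' of the derivatives of
the two Kullback–Leibler divergence curves is strictly decreasing on (x₁*, x₂*). -/
theorem ratio_strict_anti_basic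
    (p u₁ u₂ : ℝ) (h0 : 0 < u₁) (h1 : u₁ < p) (h2 : p < u₂)
    (a₁ a₂ b₁ b₂ x₁s x₂s : ℝ)
    (ha₁ : a₁ = p - u₁ + p * Real.log (u₁ / p))
    (ha₂ : a₂ = p - u₂ + p * Real.log (u₂ / p))
    (hb₁ : b₁ = p ^ 2 + u₁ * p * (Real.log (u₁ / p) - 1))
    (hb₂ : b₂ = p ^ 2 + u₂ * p * (Real.log (u₂ / p) - 1))
    (hx₁s : x₁s = -b₁ / a₁) (hx₂s : x₂s = -b₂ / a₂) :
    ∀ x y : ℝ, x₁s < x → x < y → y < x₂s →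
      deriv (fun z => klBern (p / (p + z)) (u₁ / (u₁ + z))) y /
          deriv (fun z => klBern (p / (p + z)) (u₂ / (u₂ + z))) y <
        deriv (fun z => klBern (p / (p + z)) (u₁ / (u₁ + z))) x /
          deriv (fun z => klBern (p / (p + z)) (u₂ / (u₂ + z))) x := by
  intro x y hx hxy hy
  have hp : 0 < p := h0.trans h1
  have hu₂ : 0 < u₂ := hp.trans h2
  have ha₁_neg : a₁ < 0 := ha₁ ▸ sub_add_mul_log_div_neg hp h0 h1.ne
  have ha₂_neg : a₂ < 0 := ha₂ ▸ sub_add_mul_log_div_neg hp hu₂ h2.ne'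
  have hx₁s_pos : 0 < x₁s := hx₁s ▸ div_pos_of_neg_of_neg
    (neg_neg_of_pos (hb₁ ▸ sq_add_mul_mul_log_div_sub_one_pos hp h0 h1.ne)) ha₁_neg
  have hratio : ∀ z, x₁s < z → z < x₂s →
      deriv (fun z => klBern (p / (p + z)) (u₁ / (u₁ + z))) z /
          deriv (fun z => klBern (p / (p + z)) (u₂ / (u₂ + z))) z =
        -(a₁ / a₂ * ((z - x₁s) / (u₁ + z) * ((u₂ + z) / (x₂s - z)))) := by
    intro z hz₁ hz₂
    have hz : 0 < z := hx₁s_pos.trans hz₁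
    rw [deriv_klBern_div_add_div_add hp h0 h1.ne ha₁ hb₁ hx₁s hz,
      deriv_klBern_div_add_div_add hp hu₂ h2.ne' ha₂ hb₂ hx₂s hz]
    field_simp [(sub_neg.2 hz₂).ne, (sub_pos.2 hz₂).ne']
    ring
  rw [hratio x hx (hxy.trans hy), hratio y (hx.trans hxy) hy]
  have hmono : (x - x₁s) / (u₁ + x) * ((u₂ + x) / (x₂s - x)) <
      (y - x₁s) / (u₁ + y) * ((u₂ + y) / (x₂s - y)) :=
    mul_lt_mul'' (sub_div_add_lt_sub_div_add (by linarith) (by linarith) hxy)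
      (add_div_sub_lt_add_div_sub (by linarith) hxy hy)
      (div_nonneg (by linarith) (by linarith)) (div_nonneg (by linarith) (by linarith))
  exact neg_lt_neg (mul_lt_mul_of_pos_left hmono (div_pos_of_neg_of_neg ha₁_neg ha₂_neg))
end

section
/- Let g, k : (0,∞) → (0,∞) be strictly increasing differentiable functions with k'(x) > 0 for all x > 0. Let 0 < u₁ < p < u₂, let h(x,q) = g(q)/(g(q)+k(x)), and for j = 1,2 set f_j(x) = d( h(x,p) | h(x,u_j) ), where d(q|r) = q·log(q/r) + (1−q)·log((1−q)/(1−r)). For j = 1,2 let C_j = ( g(p)·g(u_j) − g(p)² − g(p)·g(u_j)·log(g(u_j)/g(p)) ) / ( g(p) − g(u_j) + g(p)·log(g(u_j)/g(p)) ), and suppose there exist x̄₁*, x̄₂* > 0 with k(x̄_j*) = C_j for j = 1,2 and x̄₁* < x̄₂*. Then the ratio f₁'(x)/f₂'(x) is strictly decreasing on (x̄₁*, x̄₂*). -/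
/-!
With `a = g p`, `b = g uⱼ` and `κ = k x`, the divergence simplifies to
`fⱼ(x) = log (b + κ) - log (a + κ) + a / (a + κ) * log (a / b)`, whence
`fⱼ'(x) = k'(x) * Fⱼ(κ) / (a + κ) ^ 2` with `Fⱼ(κ) = (a - b) + (a - b) ^ 2 / (b + κ) - a log (a / b)`.
The common factor cancels in `f₁' / f₂'`. Each `Fⱼ` is strictly decreasing and vanishes at `κ = Cⱼ`,
so for `x ∈ (x̄₁*, x̄₂*)` the numerator `F₁(k x)` is negative and strictly decreasing while the
denominator `F₂(k x)` is positive and decreasing; such a quotient is strictly decreasing.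
-/

open Real Set Filter Topology

theorem StrictAntiOn.div_of_neg_of_pos {α β : Type*} [Preorder α] [Field β] [LinearOrder β]
    [IsStrictOrderedRing β] {f g : α → β} {s : Set α}
    (hf : StrictAntiOn f s) (hg : AntitoneOn g s) (hf_neg : ∀ x ∈ s, f x < 0)
    (hg_pos : ∀ x ∈ s, 0 < g x) : StrictAntiOn (fun x => f x / g x) s := by
  intro x hx y hy hxy
  rw [div_lt_div_iff₀ (hg_pos y hy) (hg_pos x hx)]
  calc f y * g x < f x * g x := mul_lt_mul_of_pos_right (hf hx hy hxy) (hg_pos x hx)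
    _ ≤ f x * g y := mul_le_mul_of_nonpos_left (hg hx hy hxy.le) (hf_neg x hx).le

theorem klBern_div_add_div_add_s8 {a b κ : ℝ} (ha : 0 < a) (hb : 0 < b) (hκ : 0 < κ) :
    klBern (a / (a + κ)) (b / (b + κ)) =
      log (b + κ) - log (a + κ) + a / (a + κ) * log (a / b) := by
  have hq : 1 - a / (a + κ) = κ / (a + κ) := by field_simp; ring
  have hr : 1 - b / (b + κ) = κ / (b + κ) := by field_simp; ring
  have hqr : a / (a + κ) / (b / (b + κ)) = a / b * ((b + κ) / (a + κ)) := by field_simp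
  have hqr' : κ / (a + κ) / (κ / (b + κ)) = (b + κ) / (a + κ) := by field_simp
  rw [klBern, hq, hr, hqr, hqr', log_mul (by positivity) (by positivity),
    log_div (add_pos hb hκ).ne' (add_pos ha hκ).ne']
  field_simp
  ring

noncomputable def klSlope (a b κ : ℝ) : ℝ :=
  (a - b) + (a - b) ^ 2 / (b + κ) - a * log (a / b)

theorem hasDerivAt_klBern_div_add_div_add_s8 {k : ℝ → ℝ} {k' x a b : ℝ} (ha : 0 < a) (hb : 0 < b)
    (hk : HasDerivAt k k' x) (hk_pos : ∀ᶠ z in 𝓝 x, 0 < k z) :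
    HasDerivAt (fun z => klBern (a / (a + k z)) (b / (b + k z)))
      (k' * klSlope a b (k x) / (a + k x) ^ 2) x := by
  have hκ : 0 < k x := hk_pos.self_of_nhds
  have hform : (fun z => log (b + k z) - log (a + k z) + a / (a + k z) * log (a / b))
      =ᶠ[𝓝 x] fun z => klBern (a / (a + k z)) (b / (b + k z)) :=
    hk_pos.mono fun z hz => (klBern_div_add_div_add_s8 ha hb hz).symm
  have H := (((hk.const_add b).log (by positivity)).sub ((hk.const_add a).log (by positivity))).add
    (((hasDerivAt_const x a).div (hk.const_add a) (by positivity)).mul_const (log (a / b)))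
  refine (H.congr_of_eventuallyEq hform.symm).congr_deriv ?_
  unfold klSlope
  field_simp
  ring

theorem klSlope_strictAntiOn {a b : ℝ} (hab : a ≠ b) : StrictAntiOn (klSlope a b) (Ioi (-b)) := by
  intro κ hκ μ _ hκμ
  have hsq : 0 < (a - b) ^ 2 := by have := sub_ne_zero.2 hab; positivity
  have : (a - b) ^ 2 / (b + μ) < (a - b) ^ 2 / (b + κ) :=
    div_lt_div_of_pos_left hsq (neg_lt_iff_pos_add'.1 hκ) (by linarith)
  unfold klSlope
  linarith

theorem sub_lt_mul_log_div {a b : ℝ} (ha : 0 < a) (hb : 0 < b) (hab : a ≠ b) :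
    a - b < a * log (a / b) := by
  have hlog := log_lt_sub_one_of_pos (div_pos hb ha) (by rwa [Ne, div_eq_one_iff_eq ha.ne', eq_comm])
  have hlin : a * (b / a - 1) = b - a := by field_simp
  rw [← inv_div, log_inv]
  nlinarith [mul_lt_mul_of_pos_left hlog ha]

noncomputable def klThreshold (a b : ℝ) : ℝ :=
  (a * b - a ^ 2 - a * b * log (b / a)) / (a - b + a * log (b / a))

section

variable {a b : ℝ} (ha : 0 < a) (hb : 0 < b) (hab : a ≠ b)
include ha hb hab

theorem add_klThreshold : b + klThreshold a b = (a - b) ^ 2 / (a * log (a / b) - (a - b)) := by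
  have hD := sub_pos.2 (sub_lt_mul_log_div ha hb hab)
  have hswap : log (b / a) = -log (a / b) := by rw [← log_inv, inv_div]
  have hden : a - b + a * -log (a / b) = -(a * log (a / b) - (a - b)) := by ring
  rw [klThreshold, hswap, hden]
  field_simp
  ring

theorem neg_lt_klThreshold : -b < klThreshold a b := by
  have hpos : 0 < (a - b) ^ 2 / (a * log (a / b) - (a - b)) :=
    div_pos (by have := sub_ne_zero.2 hab; positivity) (sub_pos.2 (sub_lt_mul_log_div ha hb hab))
  linarith [add_klThreshold ha hb hab]

theorem klSlope_klThreshold : klSlope a b (klThreshold a b) = 0 := by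
  have hsq : (a - b) ^ 2 ≠ 0 := by have := sub_ne_zero.2 hab; positivity
  rw [klSlope, add_klThreshold ha hb hab, div_div_cancel₀ hsq]
  ring

theorem klSlope_neg_of_klThreshold_lt {κ : ℝ} (hκ : klThreshold a b < κ) : klSlope a b κ < 0 :=
  klSlope_klThreshold ha hb hab ▸ klSlope_strictAntiOn hab (neg_lt_klThreshold ha hb hab)
    ((neg_lt_klThreshold ha hb hab).trans hκ) hκ

theorem klSlope_pos_of_lt_klThreshold {κ : ℝ} (hbκ : -b < κ) (hκ : κ < klThreshold a b) :
    0 < klSlope a b κ :=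
  klSlope_klThreshold ha hb hab ▸ klSlope_strictAntiOn hab hbκ (neg_lt_klThreshold ha hb hab) hκ

end

theorem ratio_strict_anti_general_general
    (g k : ℝ → ℝ)
    (hg_pos : ∀ q > (0:ℝ), 0 < g q) (hk_pos : ∀ x > (0:ℝ), 0 < k x)
    (hg_mono : StrictMonoOn g (Set.Ioi 0)) (hk_mono : StrictMonoOn k (Set.Ioi 0))
    (hk_diff : ∀ x > (0:ℝ), DifferentiableAt ℝ k x)
    (hk' : ∀ x > (0:ℝ), 0 < deriv k x)
    (p u₁ u₂ : ℝ) (h0 : 0 < u₁) (h1 : u₁ < p) (h2 : p < u₂)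
    (C₁ C₂ x₁s x₂s : ℝ)
    (hC₁ : C₁ = (g p * g u₁ - g p ^ 2 - g p * g u₁ * Real.log (g u₁ / g p)) /
        (g p - g u₁ + g p * Real.log (g u₁ / g p)))
    (hC₂ : C₂ = (g p * g u₂ - g p ^ 2 - g p * g u₂ * Real.log (g u₂ / g p)) /
        (g p - g u₂ + g p * Real.log (g u₂ / g p)))
    (hx₁s : 0 < x₁s)
    (hk₁ : k x₁s = C₁) (hk₂ : k x₂s = C₂) (hlt : x₁s < x₂s) :
    StrictAntiOn (fun x =>
        deriv (fun z => klBern (g p / (g p + k z)) (g u₁ / (g u₁ + k z))) x /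
        deriv (fun z => klBern (g p / (g p + k z)) (g u₂ / (g u₂ + k z))) x)
      (Set.Ioo x₁s x₂s) := by
  obtain rfl : C₁ = klThreshold (g p) (g u₁) := hC₁
  obtain rfl : C₂ = klThreshold (g p) (g u₂) := hC₂
  have hp : 0 < p := h0.trans h1
  have hu₂ : 0 < u₂ := hp.trans h2
  have ha := hg_pos p hp
  have hb₁ := hg_pos u₁ h0
  have hb₂ := hg_pos u₂ hu₂
  have hne₁ : g p ≠ g u₁ := (hg_mono h0 hp h1).ne'
  have hne₂ : g p ≠ g u₂ := (hg_mono hp hu₂ h2).ne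
  have hs : Ioo x₁s x₂s ⊆ Ioi 0 := fun x hx => hx₁s.trans hx.1
  have hk_gt : ∀ b > 0, MapsTo k (Ioo x₁s x₂s) (Ioi (-b)) := fun b hb x hx =>
    (neg_neg_of_pos hb).trans (hk_pos x (hs hx))
  have hderiv : ∀ b > 0, ∀ x > 0, deriv (fun z => klBern (g p / (g p + k z)) (b / (b + k z))) x
      = deriv k x * klSlope (g p) b (k x) / (g p + k x) ^ 2 := fun b hb x hx =>
    (hasDerivAt_klBern_div_add_div_add_s8 ha hb (hk_diff x hx).hasDerivAt
      ((eventually_gt_nhds hx).mono hk_pos)).deriv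
  refine StrictAntiOn.congr (f₁ := fun x => klSlope (g p) (g u₁) (k x) / klSlope (g p) (g u₂) (k x))
    ?_ fun x hx => ?_
  · have hk_s := hk_mono.mono hs
    refine ((klSlope_strictAntiOn hne₁).comp_strictMonoOn hk_s (hk_gt _ hb₁)).div_of_neg_of_pos
      ((klSlope_strictAntiOn hne₂).comp_strictMonoOn hk_s (hk_gt _ hb₂)).antitoneOn
      (fun x hx => ?_) (fun x hx => ?_)
    · exact klSlope_neg_of_klThreshold_lt ha hb₁ hne₁ (hk₁ ▸ hk_mono hx₁s (hs hx) hx.1)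
    · exact klSlope_pos_of_lt_klThreshold ha hb₂ hne₂ (hk_gt _ hb₂ hx)
        (hk₂ ▸ hk_mono (hs hx) (hx₁s.trans hlt) hx.2)
  · have hx0 : 0 < x := hs hx
    simp only [hderiv _ hb₁ x hx0, hderiv _ hb₂ x hx0]
    rw [div_div_div_cancel_right₀ (pow_pos (add_pos ha (hk_pos x hx0)) 2).ne',
      mul_div_mul_left _ _ (hk' x hx0).ne']

/-- Theorem 13(a) for the general family h(x,p) = g(p)/(g(p)+k(x)): the ratio
f₁'/f₂' of the derivatives of the two Kullback–Leibler divergence curves is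
strictly decreasing on (x̄₁*, x̄₂*). -/
theorem ratio_strict_anti_general
    (g k : ℝ → ℝ)
    (hg_pos : ∀ q > (0:ℝ), 0 < g q) (hk_pos : ∀ x > (0:ℝ), 0 < k x)
    (hg_mono : StrictMonoOn g (Set.Ioi 0)) (hk_mono : StrictMonoOn k (Set.Ioi 0))
    (hg_diff : ∀ q > (0:ℝ), DifferentiableAt ℝ g q)
    (hk_diff : ∀ x > (0:ℝ), DifferentiableAt ℝ k x)
    (hk' : ∀ x > (0:ℝ), 0 < deriv k x)
    (p u₁ u₂ : ℝ) (h0 : 0 < u₁) (h1 : u₁ < p) (h2 : p < u₂)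
    (C₁ C₂ x₁s x₂s : ℝ)
    (hC₁ : C₁ = (g p * g u₁ - g p ^ 2 - g p * g u₁ * Real.log (g u₁ / g p)) /
        (g p - g u₁ + g p * Real.log (g u₁ / g p)))
    (hC₂ : C₂ = (g p * g u₂ - g p ^ 2 - g p * g u₂ * Real.log (g u₂ / g p)) /
        (g p - g u₂ + g p * Real.log (g u₂ / g p)))
    (hx₁s : 0 < x₁s) (hx₂s : 0 < x₂s)
    (hk₁ : k x₁s = C₁) (hk₂ : k x₂s = C₂) (hlt : x₁s < x₂s) :
    StrictAntiOn (fun x =>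
        deriv (fun z => klBern (g p / (g p + k z)) (g u₁ / (g u₁ + k z))) x /
        deriv (fun z => klBern (g p / (g p + k z)) (g u₂ / (g u₂ + k z))) x)
      (Set.Ioo x₁s x₂s) :=
  ratio_strict_anti_general_general g k hg_pos hk_pos hg_mono hk_mono hk_diff hk' p u₁ u₂ h0 h1 h2
    C₁ C₂ x₁s x₂s hC₁ hC₂ hx₁s hk₁ hk₂ hlt
end

section
/- For q, x > 0 set h(x,q) = q/(q+x), let d(q|r) = q·log(q/r) + (1−q)·log((1−q)/(1−r)) for q, r ∈ (0,1), and for p, u > 0 with p ≠ u set x*(p,u) = ( p·u − p² − p·u·log(u/p) ) / ( p − u + p·log(u/p) ). Let 0 < u_i < u_{i+1} ≤ u_j < u_{j+1}, let p₁ ∈ (u_i, u_{i+1}) and p₂ ∈ (u_j, u_{j+1}) with p₁ < p₂. Suppose x̃₁ maximizes x ↦ min{ d(h(x,p₁)|h(x,u_i)), d(h(x,p₁)|h(x,u_{i+1})) } over [x*(p₁,u_i), x*(p₁,u_{i+1})], and x̃₂ maximizes x ↦ min{ d(h(x,p₂)|h(x,u_j)), d(h(x,p₂)|h(x,u_{j+1}))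 } over [x*(p₂,u_j), x*(p₂,u_{j+1})]. Then x̃₁ ≤ x̃₂. -/
/-- The unique maximizer in x of d(h(x,p)|h(x,u)) for h(x,p) = p/(p+x). -/
noncomputable def xstar (p u : ℝ) : ℝ :=
  (p * u - p ^ 2 - p * u * Real.log (u / p)) / (p - u + p * Real.log (u / p))

lemma two_log_lt (t : ℝ) (ht : 1 < t) : 2 * Real.log t < t - 1 / t := by
  have h0 : (0:ℝ) < t := by linarith
  have hy : 0 < Real.log t := Real.log_pos ht
  have hs : Real.log t < Real.sinh (Real.log t) := Real.self_lt_sinh_iff.2 hy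
  rw [Real.sinh_eq, Real.exp_log h0, Real.exp_neg, Real.exp_log h0] at hs
  have : (1:ℝ)/t = t⁻¹ := one_div t
  linarith

lemma lt_two_log (t : ℝ) (h0 : 0 < t) (ht : t < 1) : t - 1 / t < 2 * Real.log t := by
  have hy : Real.log t < 0 := Real.log_neg h0 ht
  have hs : -Real.log t < Real.sinh (-Real.log t) := Real.self_lt_sinh_iff.2 (by linarith)
  rw [Real.sinh_neg, Real.sinh_eq, Real.exp_log h0, Real.exp_neg, Real.exp_log h0] at hs
  have : (1:ℝ)/t = t⁻¹ := one_div t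
  linarith

lemma denom_neg (p u : ℝ) (hp : 0 < p) (hu : 0 < u) (hne : u ≠ p) :
    p - u + p * Real.log (u / p) < 0 := by
  have ht : u / p ≠ 1 := by
    intro h
    exact hne (by field_simp at h; linarith)
  have hlog : Real.log (u / p) < u / p - 1 :=
    Real.log_lt_sub_one_of_pos (by positivity) ht
  have h2 : p * Real.log (u / p) < p * (u / p - 1) :=
    mul_lt_mul_of_pos_left hlog hp
  have h3 : p * (u / p - 1) = u - p := by field_simp
  linarith

lemma xstar_le (p u : ℝ) (hp : 0 < p) (hpu : p < u) : xstar p u ≤ u := by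
  have hu : 0 < u := hp.trans hpu
  have hD := denom_neg p u hp hu (ne_of_gt hpu)
  have ht : 1 < u / p := (one_lt_div hp).2 hpu
  have h2 := two_log_lt (u / p) ht
  rw [one_div_div] at h2
  have h4 : (p * u) * (2 * Real.log (u / p)) < (p * u) * (u / p - p / u) :=
    mul_lt_mul_of_pos_left h2 (by positivity)
  have h5 : (p * u) * (u / p - p / u) = u * u - p * p := by field_simp
  rw [xstar, div_le_iff_of_neg hD]
  nlinarith

lemma le_xstar (p u : ℝ) (hu : 0 < u) (hup : u < p) : u ≤ xstar p u := by
  have hp : 0 < p := hu.trans hup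
  have hD := denom_neg p u hp hu (ne_of_lt hup)
  have ht : u / p < 1 := (div_lt_one hp).2 hup
  have h2 := lt_two_log (u / p) (by positivity) ht
  rw [one_div_div] at h2
  have h4 : (p * u) * (u / p - p / u) < (p * u) * (2 * Real.log (u / p)) :=
    mul_lt_mul_of_pos_left h2 (by positivity)
  have h5 : (p * u) * (u / p - p / u) = u * u - p * p := by field_simp
  rw [xstar, le_div_iff_of_neg hD]
  nlinarith

/-- Theorem 13(b): monotonicity of the optimal question level in ability for
the response function h(x,p) = p/(p+x). -/
theorem optimal_question_monotone
    (ui ui1 uj uj1 p₁ p₂ : ℝ)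
    (h0 : 0 < ui) (h1 : ui < ui1) (h2 : ui1 ≤ uj) (h3 : uj < uj1)
    (hp₁ : p₁ ∈ Set.Ioo ui ui1) (hp₂ : p₂ ∈ Set.Ioo uj uj1) (hp : p₁ < p₂)
    (x₁ x₂ : ℝ)
    (hx₁mem : x₁ ∈ Set.Icc (xstar p₁ ui) (xstar p₁ ui1))
    (hx₁max : IsMaxOn
      (fun x => min (klBern (p₁ / (p₁ + x)) (ui / (ui + x)))
                    (klBern (p₁ / (p₁ + x)) (ui1 / (ui1 + x))))
      (Set.Icc (xstar p₁ ui) (xstar p₁ ui1)) x₁)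
    (hx₂mem : x₂ ∈ Set.Icc (xstar p₂ uj) (xstar p₂ uj1))
    (hx₂max : IsMaxOn
      (fun x => min (klBern (p₂ / (p₂ + x)) (uj / (uj + x)))
                    (klBern (p₂ / (p₂ + x)) (uj1 / (uj1 + x))))
      (Set.Icc (xstar p₂ uj) (xstar p₂ uj1)) x₂) :
    x₁ ≤ x₂ := by
  have hp₁pos : 0 < p₁ := h0.trans hp₁.1
  have huj : 0 < uj := by linarith [hp₁.2]
  have ha : x₁ ≤ xstar p₁ ui1 := hx₁mem.2
  have hb : xstar p₁ ui1 ≤ ui1 := xstar_le p₁ ui1 hp₁pos hp₁.2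
  have hc : uj ≤ xstar p₂ uj := le_xstar p₂ uj huj hp₂.1
  have hd : xstar p₂ uj ≤ x₂ := hx₂mem.1
  linarith
end

section
/- Let 0 < u₁ < p < u₂. For j = 1,2 set a_j = p − u_j + p·log(u_j/p), b_j = p² + u_j·p·(log(u_j/p) − 1), and x_j* = −b_j/a_j, and define B(x) = (a₁·x + b₁)/(a₂·x + b₂). Then the function x ↦ B(x)/B'(x) is concave on (x₁*, x₂*); explicitly, B(x)/B'(x) = (a₁·x + b₁)(a₂·x + b₂)/(a₁·b₂ − b₁·a₂) and its second derivative equals 2·a₁·a₂/(a₁·b₂ − b₁·a₂), which is strictly negative. -/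
/-!
Since `log x < x - 1`, both `a_j` are negative. The determinant `a₁b₂ - b₁a₂` equals
`p·((p-u₁)(p-u₂)(L₁-L₂) + p(u₂-u₁)L₁L₂)` with `L_j = log(u_j/p)`, and it is negative by the
bound `2(u-p) < (u+p)·log(u/p)` for `0 < p < u` (the logarithmic mean lies below the arithmetic
mean), applied to the pairs `(p, u₂)` and `(u₁, p)`. Left of `x₂*` the denominator `a₂x+b₂` is
positive, so `B/B'` is the quadratic `(a₁x+b₁)(a₂x+b₂)/(a₁b₂-b₁a₂)`, whose leading coefficient
`a₁a₂/(a₁b₂-b₁a₂)` is negative.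
-/

open Real Set

/-- The first two terms of the series of `log (1 + a⁻¹)` with `a = p / (u - p)`. -/
theorem two_mul_sub_lt_add_mul_log_div {p u : ℝ} (hp : 0 < p) (hpu : p < u) :
    2 * (u - p) < (u + p) * log (u / p) := by
  have ha : 0 < p / (u - p) := div_pos hp (sub_pos.2 hpu)
  have hr : 1 / (2 * (p / (u - p)) + 1) = (u - p) / (u + p) := by
    field_simp [(sub_pos.2 hpu).ne']
    ring
  have hlog : 1 + (p / (u - p))⁻¹ = u / p := by
    field_simp [(sub_pos.2 hpu).ne']
    ring
  have hsum := sum_le_hasSum (Finset.range 2) (fun k _ => by positivity) (hasSum_log_one_add_inv ha)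
  simp only [Finset.sum_range_succ, Finset.sum_range_zero, hr, hlog] at hsum
  have hq : 0 < (u - p) / (u + p) := div_pos (sub_pos.2 hpu) (by linarith)
  have hlt : 2 * ((u - p) / (u + p)) < log (u / p) := by
    push_cast at hsum
    nlinarith [pow_pos hq 3]
  rw [mul_div_assoc', div_lt_iff₀ (by linarith)] at hlt
  linarith

/-- `a` and `b` in the numerator `a x + b` of `f'(x)`, for `f(x) = d(h(x,p) | h(x,u))`. -/
noncomputable def numSlope (p u : ℝ) : ℝ := p - u + p * log (u / p)

noncomputable def numIntercept (p u : ℝ) : ℝ := p ^ 2 + u * p * (log (u / p) - 1)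

theorem numSlope_neg {p u : ℝ} (hp : 0 < p) (hu : 0 < u) (hne : u ≠ p) : numSlope p u < 0 := by
  have hlog := log_lt_sub_one_of_pos (div_pos hu hp) (by rwa [ne_eq, div_eq_one_iff_eq hp.ne'])
  have hmul : p * (u / p - 1) = u - p := by field_simp
  unfold numSlope
  nlinarith

theorem numSlope_mul_numIntercept_sub_neg {p u₁ u₂ : ℝ} (h0 : 0 < u₁) (h1 : u₁ < p)
    (h2 : p < u₂) :
    numSlope p u₁ * numIntercept p u₂ - numIntercept p u₁ * numSlope p u₂ < 0 := by
  have hp : 0 < p := h0.trans h1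
  set L₁ := log (u₁ / p)
  set L₂ := log (u₂ / p)
  have hL₁ : L₁ < 0 := log_neg (div_pos h0 hp) ((div_lt_one hp).2 h1)
  have hL₂ : 0 < L₂ := log_pos ((one_lt_div hp).2 h2)
  have hpade₁ : 2 * (p - u₁) < (p + u₁) * -L₁ := by
    have := two_mul_sub_lt_add_mul_log_div h0 h1
    rwa [← inv_div, log_inv] at this
  have hpade₂ : 2 * (u₂ - p) < (u₂ + p) * L₂ := two_mul_sub_lt_add_mul_log_div hp h2
  have hdet : numSlope p u₁ * numIntercept p u₂ - numIntercept p u₁ * numSlope p u₂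
      = p * ((p - u₁) * (p - u₂) * (L₁ - L₂) + p * (u₂ - u₁) * (L₁ * L₂)) := by
    unfold numSlope numIntercept; ring
  rw [hdet]
  refine mul_neg_of_pos_of_neg hp ?_
  linarith [mul_lt_mul_of_pos_left hpade₁ (mul_pos (sub_pos.2 h2) hL₂),
    mul_lt_mul_of_pos_left hpade₂ (mul_pos (sub_pos.2 h1) (neg_pos.2 hL₁))]

section AffineRatio

variable {a₁ a₂ b₁ b₂ : ℝ}

theorem hasDerivAt_mul_add (a b x : ℝ) : HasDerivAt (fun y => a * y + b) a x := by
  simpa using ((hasDerivAt_id x).const_mul a).add_const b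

theorem hasDerivAt_affine_div {x : ℝ} (hx : a₂ * x + b₂ ≠ 0) :
    HasDerivAt (fun y => (a₁ * y + b₁) / (a₂ * y + b₂))
      ((a₁ * b₂ - b₁ * a₂) / (a₂ * x + b₂) ^ 2) x := by
  refine ((hasDerivAt_mul_add a₁ b₁ x).fun_div (hasDerivAt_mul_add a₂ b₂ x) hx).congr_deriv ?_
  ring

theorem affine_div_div_deriv {x : ℝ} (hx : a₂ * x + b₂ ≠ 0) :
    (a₁ * x + b₁) / (a₂ * x + b₂) / deriv (fun y => (a₁ * y + b₁) / (a₂ * y + b₂)) x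
      = (a₁ * x + b₁) * (a₂ * x + b₂) / (a₁ * b₂ - b₁ * a₂) := by
  rw [(hasDerivAt_affine_div hx).deriv]
  field_simp

theorem concaveOn_affine_mul_affine_div {D : ℝ} (ha : 0 ≤ a₁ * a₂) (hD : D < 0) :
    ConcaveOn ℝ univ (fun x => (a₁ * x + b₁) * (a₂ * x + b₂) / D) := by
  refine ⟨convex_univ, fun x _ y _ s t hs ht hst => ?_⟩
  obtain rfl : t = 1 - s := by linarith
  simp only [smul_eq_mul]
  rw [mul_div_assoc', mul_div_assoc', ← add_div, div_le_div_right_of_neg hD]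
  nlinarith [mul_nonneg (mul_nonneg (mul_nonneg ha hs) ht) (sq_nonneg (x - y))]

theorem deriv_deriv_affine_mul_affine_div (D x : ℝ) :
    deriv (deriv fun y => (a₁ * y + b₁) * (a₂ * y + b₂) / D) x = 2 * a₁ * a₂ / D := by
  have hfirst : (deriv fun y => (a₁ * y + b₁) * (a₂ * y + b₂) / D)
      = fun y => (2 * a₁ * a₂ * y + (a₁ * b₂ + b₁ * a₂)) / D := by
    funext y
    rw [((hasDerivAt_mul_add a₁ b₁ y).fun_mul (hasDerivAt_mul_add a₂ b₂ y) |>.div_const D).deriv]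
    ring
  rw [hfirst]
  exact ((hasDerivAt_mul_add _ _ x).div_const D).deriv

end AffineRatio

theorem B_over_B'_concave_general
    (p u₁ u₂ : ℝ) (h0 : 0 < u₁) (h1 : u₁ < p) (h2 : p < u₂)
    (a₁ a₂ b₁ b₂ x₁s x₂s : ℝ)
    (ha₁ : a₁ = p - u₁ + p * Real.log (u₁ / p))
    (ha₂ : a₂ = p - u₂ + p * Real.log (u₂ / p))
    (hb₁ : b₁ = p ^ 2 + u₁ * p * (Real.log (u₁ / p) - 1))
    (hb₂ : b₂ = p ^ 2 + u₂ * p * (Real.log (u₂ / p) - 1))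
    (hx₂s : x₂s = -b₂ / a₂)
    (B : ℝ → ℝ) (hB : ∀ x, B x = (a₁ * x + b₁) / (a₂ * x + b₂)) :
    ConcaveOn ℝ (Set.Ioo x₁s x₂s) (fun x => B x / deriv B x) ∧
    (∀ x ∈ Set.Ioo x₁s x₂s,
      B x / deriv B x = (a₁ * x + b₁) * (a₂ * x + b₂) / (a₁ * b₂ - b₁ * a₂)) ∧
    (∀ x ∈ Set.Ioo x₁s x₂s,
      deriv (deriv (fun y => B y / deriv B y)) x = 2 * a₁ * a₂ / (a₁ * b₂ - b₁ * a₂)) ∧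
    2 * a₁ * a₂ / (a₁ * b₂ - b₁ * a₂) < 0 := by
  have hp : 0 < p := h0.trans h1
  have hneg₁ : a₁ < 0 := ha₁ ▸ numSlope_neg hp h0 h1.ne
  have hneg₂ : a₂ < 0 := ha₂ ▸ numSlope_neg hp (hp.trans h2) h2.ne'
  have hdet : a₁ * b₂ - b₁ * a₂ < 0 := by
    subst ha₁ ha₂ hb₁ hb₂
    exact numSlope_mul_numIntercept_sub_neg h0 h1 h2
  have hden : ∀ x ∈ Ioo x₁s x₂s, a₂ * x + b₂ ≠ 0 := fun x hx => by
    have := (lt_div_iff_of_neg hneg₂).1 (hx₂s ▸ hx.2)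
    linarith
  have hEq : EqOn (fun x => B x / deriv B x)
      (fun x => (a₁ * x + b₁) * (a₂ * x + b₂) / (a₁ * b₂ - b₁ * a₂)) (Ioo x₁s x₂s) := fun x hx => by
    rw [show B = _ from funext hB]
    exact affine_div_div_deriv (hden x hx)
  have hprod : 0 < a₁ * a₂ := mul_pos_of_neg_of_neg hneg₁ hneg₂
  refine ⟨((concaveOn_affine_mul_affine_div hprod.le hdet).subset (subset_univ _)
      (convex_Ioo _ _)).congr hEq.symm,
    hEq, fun x hx => ?_, div_neg_of_pos_of_neg (by linarith) hdet⟩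
  rw [(hEq.eventuallyEq_of_mem (isOpen_Ioo.mem_nhds hx)).deriv.deriv_eq]
  exact deriv_deriv_affine_mul_affine_div _ x

/-- Lemma 14 (second part): x ↦ B(x)/B'(x) is concave on (x₁*, x₂*); explicitly
B/B' = (a₁x+b₁)(a₂x+b₂)/(a₁b₂−b₁a₂) and its second derivative is the constant
2a₁a₂/(a₁b₂−b₁a₂), which is strictly negative. -/
theorem B_over_B'_concave
    (p u₁ u₂ : ℝ) (h0 : 0 < u₁) (h1 : u₁ < p) (h2 : p < u₂)
    (a₁ a₂ b₁ b₂ x₁s x₂s : ℝ)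
    (ha₁ : a₁ = p - u₁ + p * Real.log (u₁ / p))
    (ha₂ : a₂ = p - u₂ + p * Real.log (u₂ / p))
    (hb₁ : b₁ = p ^ 2 + u₁ * p * (Real.log (u₁ / p) - 1))
    (hb₂ : b₂ = p ^ 2 + u₂ * p * (Real.log (u₂ / p) - 1))
    (hx₁s : x₁s = -b₁ / a₁) (hx₂s : x₂s = -b₂ / a₂)
    (B : ℝ → ℝ) (hB : ∀ x, B x = (a₁ * x + b₁) / (a₂ * x + b₂)) :
    ConcaveOn ℝ (Set.Ioo x₁s x₂s) (fun x => B x / deriv B x) ∧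
    (∀ x ∈ Set.Ioo x₁s x₂s,
      B x / deriv B x = (a₁ * x + b₁) * (a₂ * x + b₂) / (a₁ * b₂ - b₁ * a₂)) ∧
    (∀ x ∈ Set.Ioo x₁s x₂s,
      deriv (deriv (fun y => B y / deriv B y)) x = 2 * a₁ * a₂ / (a₁ * b₂ - b₁ * a₂)) ∧
    2 * a₁ * a₂ / (a₁ * b₂ - b₁ * a₂) < 0 :=
  B_over_B'_concave_general p u₁ u₂ h0 h1 h2 a₁ a₂ b₁ b₂ x₁s x₂s ha₁ ha₂ hb₁ hb₂ hx₂s B hB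
end

section
/- For every real t > 0, (t − 1)·( 2·(1 − t) + (1 + t)·log t ) ≥ 0, with equality at t = 1. -/
/-! The second factor is `g t = (1 + t) log t - 2 (t - 1)`, which vanishes at `1` and has
`g' t = log t + 1/t - 1 ≥ 0`; so `g` is monotone and has the sign of `t - 1`. -/

open Real Set

lemma MonotoneOn.sub_mul_nonneg_of_eq_zero {R : Type*} [Ring R] [LinearOrder R]
    [IsStrictOrderedRing R] {f : R → R} {s : Set R} {a t : R} (hf : MonotoneOn f s)
    (ha : a ∈ s) (ht : t ∈ s) (hfa : f a = 0) : 0 ≤ (t - a) * f t := by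
  rcases le_total a t with hat | hta
  · exact mul_nonneg (sub_nonneg.mpr hat) (hfa ▸ hf ha ht hat)
  · exact mul_nonneg_of_nonpos_of_nonpos (sub_nonpos.mpr hta) (hfa ▸ hf ht ha hta)

lemma hasDerivAt_one_add_mul_log_sub {t : ℝ} (ht : t ≠ 0) :
    HasDerivAt (fun x ↦ (1 + x) * log x - 2 * (x - 1)) (log t + t⁻¹ - 1) t := by
  have h : HasDerivAt (fun x ↦ (1 + x) * log x - 2 * (x - 1))
      (1 * log t + (1 + t) * t⁻¹ - 2 * 1) t :=
    (((hasDerivAt_id t).const_add 1).mul (hasDerivAt_log ht)).sub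
      (((hasDerivAt_id t).sub_const 1).const_mul 2)
  convert h using 1
  rw [add_mul, mul_inv_cancel₀ ht]
  ring

lemma monotoneOn_one_add_mul_log_sub :
    MonotoneOn (fun x ↦ (1 + x) * log x - 2 * (x - 1)) (Ioi 0) := by
  have hderiv : ∀ x ∈ Ioi (0 : ℝ),
      HasDerivAt (fun x ↦ (1 + x) * log x - 2 * (x - 1)) (log x + x⁻¹ - 1) x :=
    fun x hx ↦ hasDerivAt_one_add_mul_log_sub (ne_of_gt hx)
  refine monotoneOn_of_hasDerivWithinAt_nonneg (f' := fun x ↦ log x + x⁻¹ - 1) (convex_Ioi 0)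
    (fun x hx ↦ (hderiv x hx).continuousAt.continuousWithinAt) ?_ ?_
  · rw [interior_Ioi]
    exact fun x hx ↦ (hderiv x hx).hasDerivWithinAt
  · rw [interior_Ioi]
    intro x hx
    linarith [one_sub_inv_le_log_of_pos (mem_Ioi.mp hx)]

/-- The inequality N(t) = (t−1)(2(1−t)+(1+t)·log t) ≥ 0 for t > 0, with equality
at t = 1 (used to show monotonicity of x*(p,u) in p). -/
theorem N_nonneg :
    (∀ t : ℝ, 0 < t → 0 ≤ (t - 1) * (2 * (1 - t) + (1 + t) * Real.log t)) ∧
    ((1 - 1 : ℝ) * (2 * (1 - 1) + (1 + 1) * Real.log 1) = 0) := by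
  refine ⟨fun t ht ↦ ?_, by simp⟩
  have h := monotoneOn_one_add_mul_log_sub.sub_mul_nonneg_of_eq_zero
    (mem_Ioi.mpr one_pos) (mem_Ioi.mpr ht) (by simp)
  linarith
end

section
/- Let p, u > 0 with p ≠ u and define f(x) = d( p/(p+x) | u/(u+x) ) for x > 0, where d(q|r) = q·log(q/r) + (1−q)·log((1−q)/(1−r)). Then f(x) = log((u+x)/(p+x)) − (p/(p+x))·log(u/p), and f'(x) = ( (p − u + p·log(u/p))·x + p² + u·p·(log(u/p) − 1) ) / ( (p+x)²·(u+x) ). Moreover, with x*(p,u) = ( p·u − p² − p·u·log(u/p) ) / ( p − u + p·log(u/p) ), one has x*(p,u) > 0, f'(x) > 0 for 0 < x < x*(p,u), and f'(x) < 0 for x > x*(p,u). -/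
open Real

lemma sub_add_mul_log_div_neg_s15 {a b : ℝ} (ha : 0 < a) (hb : 0 < b) (hab : a ≠ b) :
    a - b + a * log (b / a) < 0 := by
  have hlog : log (b / a) < b / a - 1 :=
    log_lt_sub_one_of_pos (div_pos hb ha) (by rwa [Ne, div_eq_one_iff_eq ha.ne', eq_comm])
  have : a * log (b / a) < a * (b / a - 1) := mul_lt_mul_of_pos_left hlog ha
  rw [mul_sub, mul_div_cancel₀ _ ha.ne', mul_one] at this
  linarith

noncomputable def klCurve (p u x : ℝ) : ℝ :=
  log ((u + x) / (p + x)) - p / (p + x) * log (u / p)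

lemma klBern_div_add_eq_klCurve {p u x : ℝ} (hp : 0 < p) (hu : 0 < u) (hx : 0 < x) :
    klBern (p / (p + x)) (u / (u + x)) = klCurve p u x := by
  have hpx : 0 < p + x := by linarith
  have hux : 0 < u + x := by linarith
  have hmean : p / (p + x) / (u / (u + x)) = (u + x) / (p + x) / (u / p) := by
    field_simp
  have hcompl : 1 - p / (p + x) = x / (p + x) := by
    field_simp
    ring
  have hcompl' : 1 - u / (u + x) = x / (u + x) := by
    field_simp
    ring
  have hratio : x / (p + x) / (x / (u + x)) = (u + x) / (p + x) := by
    field_simp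
  rw [klBern, klCurve, hmean, hcompl, hcompl', hratio,
    log_div (div_pos hux hpx).ne' (div_pos hu hp).ne']
  generalize log ((u + x) / (p + x)) = M
  field_simp
  ring

lemma hasDerivAt_klCurve {p u x : ℝ} (hpx : p + x ≠ 0) (hux : u + x ≠ 0) :
    HasDerivAt (klCurve p u)
      (((p - u + p * log (u / p)) * x + p ^ 2 + u * p * (log (u / p) - 1)) /
        ((p + x) ^ 2 * (u + x))) x := by
  have hlin : ∀ c : ℝ, HasDerivAt (fun y => c + y) 1 x := fun c => by
    simpa using (hasDerivAt_id x).const_add c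
  have hratio := ((hlin u).div (hlin p) hpx).log (div_ne_zero hux hpx)
  have hmean := ((hasDerivAt_const x p).div (hlin p) hpx).mul_const (log (u / p))
  refine (hratio.sub hmean).congr_deriv ?_
  simp only [Pi.div_apply]
  field_simp
  ring

/-- Lemma B.5 for h(x,p) = p/(p+x): explicit form of the KL divergence curve
f(x) = d(h(x,p)|h(x,u)), its derivative, and unimodality with maximizer x*(p,u). -/
theorem kl_curve_explicit
    (p u : ℝ) (hp : 0 < p) (hu : 0 < u) (hne : p ≠ u)
    (f : ℝ → ℝ)
    (hf : ∀ x, f x = klBern (p / (p + x)) (u / (u + x)))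
    (xs : ℝ)
    (hxs : xs = (p * u - p ^ 2 - p * u * Real.log (u / p)) /
        (p - u + p * Real.log (u / p))) :
    (∀ x > (0:ℝ), f x = Real.log ((u + x) / (p + x)) - (p / (p + x)) * Real.log (u / p)) ∧
    (∀ x > (0:ℝ), deriv f x =
        ((p - u + p * Real.log (u / p)) * x + p ^ 2 + u * p * (Real.log (u / p) - 1)) /
          ((p + x) ^ 2 * (u + x))) ∧
    0 < xs ∧
    (∀ x : ℝ, 0 < x → x < xs → 0 < deriv f x) ∧
    (∀ x : ℝ, xs < x → deriv f x < 0) := by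
  have hform : ∀ x > (0:ℝ), f x = klCurve p u x := fun x hx =>
    (hf x).trans (klBern_div_add_eq_klCurve hp hu hx)
  have hderiv : ∀ x > (0:ℝ), deriv f x =
      ((p - u + p * log (u / p)) * x + p ^ 2 + u * p * (log (u / p) - 1)) /
        ((p + x) ^ 2 * (u + x)) := fun x hx =>
    ((hasDerivAt_klCurve (by linarith) (by linarith)).congr_of_eventuallyEq
      (eventually_gt_nhds hx |>.mono hform)).deriv
  have hD : p - u + p * log (u / p) < 0 := sub_add_mul_log_div_neg_s15 hp hu hne
  have hN : p * u - p ^ 2 - p * u * log (u / p) < 0 := by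
    have h := sub_add_mul_log_div_neg_s15 hu hp hne.symm
    rw [← inv_div, log_inv] at h
    linarith [mul_neg_of_pos_of_neg hp h]
  have hnum : ∀ x, (p - u + p * log (u / p)) * x + p ^ 2 + u * p * (log (u / p) - 1) =
      (p - u + p * log (u / p)) * (x - xs) := fun x => by
    rw [hxs, mul_sub (p - u + p * log (u / p)), mul_div_cancel₀ _ hD.ne]
    ring
  have hxs_pos : 0 < xs := hxs ▸ div_pos_of_neg_of_neg hN hD
  refine ⟨hform, hderiv, hxs_pos, fun x hx hlt => ?_, fun x hlt => ?_⟩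
  · rw [hderiv x hx, hnum]
    exact div_pos (mul_pos_of_neg_of_neg hD (by linarith)) (by positivity)
  · have hx : 0 < x := hxs_pos.trans hlt
    rw [hderiv x hx, hnum]
    exact div_neg_of_neg_of_pos (mul_neg_of_neg_of_pos hD (by linarith)) (by positivity)
end

section
/- Let g : (0,∞) → (0,∞) be differentiable with g'(p) > 0 for all p > 0, and let k : (0,∞) → (0,∞). Let t ≥ 1, let x₁, …, x_t > 0, and let I₁, …, I_t ∈ {0,1}. Define L(p) = Σ_{j=1}^t [ I_j·log( g(p)/(g(p)+k(x_j)) ) + (1−I_j)·log( k(x_j)/(g(p)+k(x_j)) ) ] for p > 0. Then L is strictly quasi-concave on (0,∞): for all 0 < p₁ < p₂ and every p ∈ (p₁, p₂), L(p) > min( L(p₁), L(p₂) ). -/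
/-!
Writing `s = log (g p)`, each summand of the log-likelihood becomes
`I s + (1 - I) log k - log (exp s + k)`, which is strictly concave in `s` because
`s ↦ log (exp s + k)` has the strictly increasing derivative `exp s / (exp s + k)`.
So `L = ψ ∘ log ∘ g` with `ψ` strictly concave and `log ∘ g` strictly increasing,
and strict concavity of `ψ` on the open segment between `log (g p₁)` and `log (g p₂)`
gives `min (L p₁) (L p₂) < L p`.
-/

open Finset Real Set

theorem strictMonoOn_of_deriv_pos_of_isOpen {D : Set ℝ} (hD : Convex ℝ D) (hDo : IsOpen D)
    {f : ℝ → ℝ} (hf' : ∀ x ∈ D, 0 < deriv f x) : StrictMonoOn f D :=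
  strictMonoOn_of_deriv_pos hD
    (fun x hx => (differentiableAt_of_deriv_ne_zero (hf' x hx).ne').continuousAt.continuousWithinAt)
    (by rwa [hDo.interior_eq])

section

variable {𝕜 E β ι : Type*} [Semiring 𝕜] [PartialOrder 𝕜] [AddCommMonoid E] [SMul 𝕜 E]
  [AddCommMonoid β] [PartialOrder β] [IsOrderedCancelAddMonoid β] [DistribMulAction 𝕜 β]
  {D : Set E}

theorem StrictConcaveOn.finset_sum {s : Finset ι} (hs : s.Nonempty) {f : ι → E → β}
    (hf : ∀ i ∈ s, StrictConcaveOn 𝕜 D (f i)) : StrictConcaveOn 𝕜 D fun x => ∑ i ∈ s, f i x := by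
  induction hs using Finset.Nonempty.cons_induction with
  | singleton i => simpa using hf i (mem_singleton_self i)
  | cons i s hi hs ih =>
    simp only [forall_mem_cons] at hf
    simp only [sum_cons]
    exact hf.1.add (ih hf.2)

end

theorem StrictConcaveOn.min_lt_of_strictMonoOn {𝕜 β : Type*} [Field 𝕜] [LinearOrder 𝕜]
    [IsStrictOrderedRing 𝕜] [AddCommMonoid β] [LinearOrder β] [IsOrderedCancelAddMonoid β]
    [Module 𝕜 β] [PosSMulStrictMono 𝕜 β] {D s : Set 𝕜} {f : 𝕜 → β} {φ : 𝕜 → 𝕜}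
    (hf : StrictConcaveOn 𝕜 D f) (hφ : StrictMonoOn φ s) (hφD : MapsTo φ s D)
    {a b c : 𝕜} (ha : a ∈ s) (hb : b ∈ s) (hc : c ∈ s) (hac : a < c) (hcb : c < b) :
    min (f (φ a)) (f (φ b)) < f (φ c) := by
  have hlt₁ := hφ ha hc hac
  have hlt₂ := hφ hc hb hcb
  refine hf.lt_on_openSegment (hφD ha) (hφD hb) (hlt₁.trans hlt₂).ne ?_
  rw [openSegment_eq_Ioo (hlt₁.trans hlt₂)]
  exact ⟨hlt₁, hlt₂⟩

theorem strictConvexOn_log_exp_add {c : ℝ} (hc : 0 < c) :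
    StrictConvexOn ℝ univ fun s => log (exp s + c) := by
  have hderiv : deriv (fun s => log (exp s + c)) = fun s => exp s / (exp s + c) := by
    funext s
    simpa using (((hasDerivAt_exp s).add_const c).log (by positivity)).deriv
  refine StrictMonoOn.strictConvexOn_of_deriv convex_univ
    (by fun_prop (disch := intro s _; positivity)) ?_
  rw [hderiv, interior_univ]
  intro s _ u _ hsu
  have hexp := exp_lt_exp.2 hsu
  rw [div_lt_div_iff₀ (by positivity) (by positivity)]
  nlinarith

noncomputable def logLikelihoodTerm (i c s : ℝ) : ℝ :=
  i * log (exp s / (exp s + c)) + (1 - i) * log (c / (exp s + c))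

theorem logLikelihoodTerm_eq (i : ℝ) {c : ℝ} (hc : 0 < c) (s : ℝ) :
    logLikelihoodTerm i c s = i * s + (1 - i) * log c - log (exp s + c) := by
  have : 0 < exp s + c := by positivity
  rw [logLikelihoodTerm, log_div (exp_pos s).ne' this.ne', log_div hc.ne' this.ne', log_exp]
  ring

theorem strictConcaveOn_logLikelihoodTerm (i : ℝ) {c : ℝ} (hc : 0 < c) :
    StrictConcaveOn ℝ univ (logLikelihoodTerm i c) := by
  have hlin : ConcaveOn ℝ univ fun s : ℝ => i * s + (1 - i) * log c :=
    ((i • LinearMap.id : ℝ →ₗ[ℝ] ℝ).concaveOn convex_univ).add_const _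
  have hsplit : logLikelihoodTerm i c =
      (fun s => i * s + (1 - i) * log c) + -fun s => log (exp s + c) := by
    funext s
    rw [logLikelihoodTerm_eq i hc, Pi.add_apply, Pi.neg_apply, sub_eq_add_neg]
  rw [hsplit]
  exact hlin.add_strictConcaveOn (strictConvexOn_log_exp_add hc).neg

theorem loglikelihood_strictly_quasiconcave_general
    (g k : ℝ → ℝ)
    (hg_pos : ∀ p > (0:ℝ), 0 < g p) (hk_pos : ∀ x > (0:ℝ), 0 < k x)
    (hg' : ∀ p > (0:ℝ), 0 < deriv g p)
    (t : ℕ) (ht : 1 ≤ t)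
    (x : Fin t → ℝ) (hx : ∀ j, 0 < x j)
    (I : Fin t → ℝ)
    (L : ℝ → ℝ)
    (hL : ∀ p, L p = ∑ j : Fin t,
        (I j * Real.log (g p / (g p + k (x j))) +
          (1 - I j) * Real.log (k (x j) / (g p + k (x j))))) :
    ∀ p₁ p₂ p : ℝ, 0 < p₁ → p₁ < p → p < p₂ → min (L p₁) (L p₂) < L p := by
  intro p₁ p₂ p hp₁ h₁p hpp₂
  have hL_eq : ∀ q ∈ Ioi (0 : ℝ), L q = ∑ j, logLikelihoodTerm (I j) (k (x j)) (log (g q)) := by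
    intro q hq
    simp only [hL, logLikelihoodTerm, exp_log (hg_pos q hq)]
  have hconc : StrictConcaveOn ℝ univ fun s => ∑ j, logLikelihoodTerm (I j) (k (x j)) s :=
    StrictConcaveOn.finset_sum (univ_nonempty_iff.2 ⟨⟨0, ht⟩⟩) fun j _ =>
      strictConcaveOn_logLikelihoodTerm (I j) (hk_pos _ (hx j))
  have hmono : StrictMonoOn (fun q => log (g q)) (Ioi 0) := fun a ha b hb hab =>
    log_lt_log (hg_pos a ha)
      (strictMonoOn_of_deriv_pos_of_isOpen (convex_Ioi 0) isOpen_Ioi hg' ha hb hab)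
  have hp : p ∈ Ioi (0 : ℝ) := hp₁.trans h₁p
  have hp₂ : p₂ ∈ Ioi (0 : ℝ) := hp.trans hpp₂
  rw [hL_eq p₁ hp₁, hL_eq p₂ hp₂, hL_eq p hp]
  exact hconc.min_lt_of_strictMonoOn hmono (mapsTo_univ _ _) hp₁ hp₂ hp h₁p hpp₂

/-- Lemma B.1: for response functions h(x,p) = g(p)/(g(p)+k(x)), the log-likelihood
of observed binary responses is strictly quasi-concave in the ability p, so the
maximum likelihood estimator is unique. -/
theorem loglikelihood_strictly_quasiconcave
    (g k : ℝ → ℝ)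
    (hg_pos : ∀ p > (0:ℝ), 0 < g p) (hk_pos : ∀ x > (0:ℝ), 0 < k x)
    (hg_diff : ∀ p > (0:ℝ), DifferentiableAt ℝ g p)
    (hg' : ∀ p > (0:ℝ), 0 < deriv g p)
    (t : ℕ) (ht : 1 ≤ t)
    (x : Fin t → ℝ) (hx : ∀ j, 0 < x j)
    (I : Fin t → ℝ) (hI : ∀ j, I j = 0 ∨ I j = 1)
    (L : ℝ → ℝ)
    (hL : ∀ p, L p = ∑ j : Fin t,
        (I j * Real.log (g p / (g p + k (x j))) +
          (1 - I j) * Real.log (k (x j) / (g p + k (x j))))) :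
    ∀ p₁ p₂ p : ℝ, 0 < p₁ → p₁ < p → p < p₂ → min (L p₁) (L p₂) < L p :=
  loglikelihood_strictly_quasiconcave_general g k hg_pos hk_pos hg' t ht x hx I L hL
end

section
/- Let g, k : (0,∞) → (0,∞) be differentiable with g'(p) ≥ 0 and k'(x) ≥ 0 for all p, x > 0, and let h(x,p) = g(p)/(g(p)+k(x)). Then for all x, p > 0, the mixed second partial derivative ∂²/∂x∂p of log h(x,p) and the mixed second partial derivative ∂²/∂x∂p of log(1 − h(x,p)) both equal g'(p)·k'(x)/(g(p)+k(x))², and in particular both are nonnegative. -/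
/-! Since `log h = log g(p) - log (g(p) + k(x))` and `log (1 - h) = log k(x) - log (g(p) + k(x))`,
both mixed partials equal that of `-log (g(p) + k(x))`: the `p`-derivative is
`-g'(p) / (g(p) + k(x))`, and differentiating in `x` gives `g'(p) k'(x) / (g(p) + k(x))²`. -/

open Filter Topology

theorem hasDerivAt_log_div_add_const {f : ℝ → ℝ} {f' c p : ℝ} (hf : HasDerivAt f f' p)
    (hp : f p ≠ 0) (hpc : f p + c ≠ 0) :
    HasDerivAt (fun q => Real.log (f q / (f q + c))) (f' / f p - f' / (f p + c)) p := by
  convert (hf.fun_div (hf.add_const c) hpc).log (div_ne_zero hp hpc) using 1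
  field_simp

theorem hasDerivAt_log_one_sub_div_add_const {f : ℝ → ℝ} {f' c p : ℝ} (hf : HasDerivAt f f' p)
    (hc : c ≠ 0) (hpc : f p + c ≠ 0) :
    HasDerivAt (fun q => Real.log (1 - f q / (f q + c))) (-(f' / (f p + c))) p := by
  have hval : 1 - f p / (f p + c) = c / (f p + c) := by field_simp; ring
  convert ((hf.fun_div (hf.add_const c) hpc).const_sub 1).log
    (by rw [hval]; exact div_ne_zero hc hpc) using 1
  rw [hval]
  field_simp
  ring

theorem hasDerivAt_const_div_const_add {k : ℝ → ℝ} {k' a b x : ℝ} (hk : HasDerivAt k k' x)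
    (hx : a + k x ≠ 0) :
    HasDerivAt (fun y => b / (a + k y)) (-(b * k') / (a + k x) ^ 2) x :=
  ((hasDerivAt_const x b).fun_div (hk.const_add a) hx).congr_deriv (by ring)

theorem deriv_deriv_of_eventually_hasDerivAt {F : ℝ → ℝ → ℝ} {φ : ℝ → ℝ} {φ' x p : ℝ}
    (hF : ∀ᶠ y in 𝓝 x, HasDerivAt (F y) (φ y) p) (hφ : HasDerivAt φ φ' x) :
    deriv (fun y => deriv (F y) p) x = φ' := by
  rw [EventuallyEq.deriv_eq (hF.mono fun _ hy => hy.deriv), hφ.deriv]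

/-- Lemma B.2: for h(x,p) = g(p)/(g(p)+k(x)), the mixed second partial derivatives
∂²/∂x∂p of log h and of log(1−h) both equal g'(p)·k'(x)/(g(p)+k(x))², and in
particular both are nonnegative. -/
theorem mixed_partials_nonneg
    (g k : ℝ → ℝ)
    (hg_pos : ∀ p > (0:ℝ), 0 < g p) (hk_pos : ∀ x > (0:ℝ), 0 < k x)
    (hg_diff : ∀ p > (0:ℝ), DifferentiableAt ℝ g p)
    (hk_diff : ∀ x > (0:ℝ), DifferentiableAt ℝ k x)
    (hg' : ∀ p > (0:ℝ), 0 ≤ deriv g p) (hk' : ∀ x > (0:ℝ), 0 ≤ deriv k x) :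
    ∀ x > (0:ℝ), ∀ p > (0:ℝ),
      (deriv (fun x' => deriv (fun p' => Real.log (g p' / (g p' + k x'))) p) x =
        deriv g p * deriv k x / (g p + k x) ^ 2) ∧
      (deriv (fun x' =>
          deriv (fun p' => Real.log (1 - g p' / (g p' + k x'))) p) x =
        deriv g p * deriv k x / (g p + k x) ^ 2) ∧
      0 ≤ deriv g p * deriv k x / (g p + k x) ^ 2 := by
  intro x hx p hp
  have hgp := (hg_diff p hp).hasDerivAt
  have hsum : ∀ y > (0:ℝ), g p + k y ≠ 0 := fun y hy => (add_pos (hg_pos p hp) (hk_pos y hy)).ne'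
  have hnear : ∀ᶠ y in 𝓝 x, 0 < y := eventually_gt_nhds hx
  have hdenom := hasDerivAt_const_div_const_add (b := deriv g p)
    (hk_diff x hx).hasDerivAt (hsum x hx)
  refine ⟨?_, ?_, div_nonneg (mul_nonneg (hg' p hp) (hk' x hx)) (sq_nonneg _)⟩
  · rw [deriv_deriv_of_eventually_hasDerivAt (hnear.mono fun y hy =>
      hasDerivAt_log_div_add_const hgp (hg_pos p hp).ne' (hsum y hy))
      (hdenom.const_sub (deriv g p / g p))]
    ring
  · rw [deriv_deriv_of_eventually_hasDerivAt (hnear.mono fun y hy =>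
      hasDerivAt_log_one_sub_div_add_const hgp (hk_pos y hy).ne' (hsum y hy)) hdenom.neg]
    ring
end
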